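/- arXiv:1409.3900 — 10 statements merged into one kernel-verified Lean document; each statement's English description precedes it below -/
import Mathlib

section
/- Let C be a q-ary code of length n with dimension k = log_q |C|, containing at least two codewords, and suppose C has (r, ℓ)-cooperative locality for positive integers r and ℓ. Then the minimum distance of C satisfies d_min(C) ≤ n − k + 1 − ℓ·⌊(k − ℓ)/r⌋. -/
/-- A code `C ⊆ (Fin n → Fin q)` has `(r, ℓ)`-cooperative locality: for every set `S`
of `ℓ` coordinates there is a set `Γ` of at most `r` coordinates, disjoint from `S`,
such that any two codewords agreeing on `Γ` agree on `S`. -/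
def CoopLocal {n q : ℕ} (C : Finset (Fin n → Fin q)) (r ℓ : ℕ) : Prop :=
  ∀ S : Finset (Fin n), S.card = ℓ →
    ∃ Γ : Finset (Fin n), Disjoint Γ S ∧ Γ.card ≤ r ∧
      ∀ c₁ ∈ C, ∀ c₂ ∈ C, (∀ i ∈ Γ, c₁ i = c₂ i) → ∀ i ∈ S, c₁ i = c₂ i

lemma coop_card_le {n q : ℕ} (C : Finset (Fin n → Fin q)) (U G : Finset (Fin n))
    (H : ∀ c₁ ∈ C, ∀ c₂ ∈ C, (∀ i ∈ G, c₁ i = c₂ i) → ∀ i ∈ U, c₁ i = c₂ i) :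
    C.card ≤ q ^ (G.card + (n - (U ∪ G).card)) := by
  classical
  have hinj : C.card ≤
      Fintype.card (({x // x ∈ G} → Fin q) × ({x // x ∈ (U ∪ G)ᶜ} → Fin q)) := by
    rw [← Finset.card_univ]
    apply Finset.card_le_card_of_injOn
      (fun c => (fun i => c i.1, fun i => c i.1)) (fun _ _ => Finset.mem_univ _)
    intro c₁ h₁ c₂ h₂ he
    have hG : ∀ i ∈ G, c₁ i = c₂ i := fun i hi =>
      congrFun (congrArg Prod.fst he) ⟨i, hi⟩
    have hcomp : ∀ i ∈ (U ∪ G)ᶜ, c₁ i = c₂ i := fun i hi =>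
      congrFun (congrArg Prod.snd he) ⟨i, hi⟩
    have hU := H c₁ h₁ c₂ h₂ hG
    funext i
    by_cases hiU : i ∈ U
    · exact hU i hiU
    · by_cases hiG : i ∈ G
      · exact hG i hiG
      · exact hcomp i (by simp [hiU, hiG])
  calc C.card ≤ _ := hinj
    _ = q ^ G.card * q ^ ((U ∪ G)ᶜ.card) := by
        rw [Fintype.card_prod, Fintype.card_fun, Fintype.card_fun, Fintype.card_coe,
          Fintype.card_coe, Fintype.card_fin]
    _ = q ^ (G.card + (n - (U ∪ G).card)) := by
        rw [Finset.card_compl, Fintype.card_fin, pow_add]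

lemma coop_pigeon {n q : ℕ} (C : Finset (Fin n → Fin q)) (G : Finset (Fin n))
    (h : q ^ G.card < C.card) :
    ∃ c₁ ∈ C, ∃ c₂ ∈ C, c₁ ≠ c₂ ∧ ∀ i ∈ G, c₁ i = c₂ i := by
  classical
  have hcard : (Finset.univ : Finset ({x // x ∈ G} → Fin q)).card < C.card := by
    simpa [Finset.card_univ, Fintype.card_fun, Fintype.card_coe] using h
  obtain ⟨c₁, h₁, c₂, h₂, hne, he⟩ :=
    Finset.exists_ne_map_eq_of_card_lt_of_maps_to hcard
      (fun c _ => Finset.mem_univ (fun i : {x // x ∈ G} => c i.1))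
  exact ⟨c₁, h₁, c₂, h₂, hne, fun i hi => congrFun he ⟨i, hi⟩⟩

lemma coop_hamming {n q : ℕ} (c₁ c₂ : Fin n → Fin q) (E : Finset (Fin n))
    (h : ∀ i ∈ E, c₁ i = c₂ i) : hammingDist c₁ c₂ + E.card ≤ n := by
  classical
  have hsub : ({i | c₁ i ≠ c₂ i} : Finset (Fin n)) ⊆ Eᶜ := by
    intro i hi
    simp only [Finset.mem_filter] at hi
    simp only [Finset.mem_compl]
    exact fun hiE => hi.2 (h i hiE)
  have h2 := Finset.card_le_card hsub
  rw [Finset.card_compl, Fintype.card_fin] at h2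
  have hE : E.card ≤ n := by
    simpa using Finset.card_le_univ E
  have hd : hammingDist c₁ c₂ = ({i | c₁ i ≠ c₂ i} : Finset (Fin n)).card := rfl
  omega

lemma coop_logb_le {q c m : ℕ} (hq : 1 < q) (hc : 0 < c) (h : c ≤ q ^ m) :
    Real.logb q c ≤ m := by
  have hq1 : (1 : ℝ) < q := by exact_mod_cast hq
  have hc0 : (0 : ℝ) < c := by exact_mod_cast hc
  rw [Real.logb_le_iff_le_rpow hq1 hc0, Real.rpow_natCast]
  exact_mod_cast h

lemma coop_build {n q r ℓ : ℕ} (C : Finset (Fin n → Fin q)) (hloc : CoopLocal C r ℓ)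
    (k : ℝ) (hq : 1 < q) (hC0 : 0 < C.card) (hk : k = Real.logb q C.card)
    (hr : 0 < r) :
    ∀ j : ℕ, ((j : ℝ) * r ≤ k - ℓ ∨ j = 0) →
      ∃ U G : Finset (Fin n), Disjoint U G ∧ U.card = j * ℓ ∧ G.card ≤ j * r ∧
        (∀ c₁ ∈ C, ∀ c₂ ∈ C, (∀ i ∈ G, c₁ i = c₂ i) → ∀ i ∈ U, c₁ i = c₂ i) := by
  intro j
  induction j with
  | zero => exact fun _ => ⟨∅, ∅, by simp, by simp, by simp, by simp⟩
  | succ j ih =>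
    intro hj
    have hr0 : (0 : ℝ) ≤ r := by positivity
    have hjr : ((j : ℝ) + 1) * r ≤ k - ℓ := by
      rcases hj with h | h
      · push_cast at h; linarith
      · omega
    obtain ⟨U, G, hdisj, hUcard, hGcard, hdet⟩ := ih (Or.inl (by nlinarith))
    -- counting: k ≤ n - |U|
    have hcount := coop_card_le C U G hdet
    have hUG : (U ∪ G).card = U.card + G.card := Finset.card_union_of_disjoint hdisj
    have hUGn : (U ∪ G).card ≤ n := by simpa using Finset.card_le_univ (U ∪ G)
    have hkle : k ≤ ((G.card + (n - (U ∪ G).card) : ℕ) : ℝ) := by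
      rw [hk]; exact coop_logb_le hq hC0 hcount
    have hkle' : k ≤ (n : ℝ) - U.card := by
      have : ((G.card + (n - (U ∪ G).card) : ℕ) : ℝ) = (n : ℝ) - U.card := by
        rw [Nat.cast_add, Nat.cast_sub hUGn, hUG]; push_cast; ring
      linarith [this ▸ hkle]
    -- room to pick ℓ fresh coordinates
    have hGr : (G.card : ℝ) ≤ (j : ℝ) * r := by exact_mod_cast hGcard
    have hroom : U.card + G.card + ℓ ≤ n := by
      have : ((U.card + G.card + ℓ : ℕ) : ℝ) ≤ (n : ℝ) := by push_cast; nlinarith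
      exact_mod_cast this
    have hcompl : ℓ ≤ ((U ∪ G)ᶜ).card := by
      rw [Finset.card_compl, Fintype.card_fin, hUG]; omega
    obtain ⟨S, hSsub, hScard⟩ := Finset.exists_subset_card_eq hcompl
    have hSU : Disjoint S U := by
      refine Finset.disjoint_left.mpr fun i hiS hiU => ?_
      have := hSsub hiS; simp [Finset.mem_compl] at this; exact this.1 hiU
    have hSG : Disjoint S G := by
      refine Finset.disjoint_left.mpr fun i hiS hiG => ?_
      have := hSsub hiS; simp [Finset.mem_compl] at this; exact this.2 hiG
    obtain ⟨Γ, hΓS, hΓr, hrep⟩ := hloc S hScard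
    refine ⟨U ∪ S, (G ∪ Γ) \ (U ∪ S), Finset.disjoint_sdiff, ?_, ?_, ?_⟩
    · rw [Finset.card_union_of_disjoint hSU.symm, hUcard, hScard]; ring
    · calc ((G ∪ Γ) \ (U ∪ S)).card ≤ (G ∪ Γ).card := Finset.card_le_card (Finset.sdiff_subset)
        _ ≤ G.card + Γ.card := Finset.card_union_le _ _
        _ ≤ j * r + r := by omega
        _ = (j + 1) * r := by ring
    · intro c₁ h₁ c₂ h₂ hagree
      have hGsub : G ⊆ (G ∪ Γ) \ (U ∪ S) := by
        intro i hi
        rw [Finset.mem_sdiff, Finset.mem_union, Finset.mem_union]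
        refine ⟨Or.inl hi, fun h => h.elim (fun hiU => ?_) (fun hiS => ?_)⟩
        · exact Finset.disjoint_left.mp hdisj hiU hi
        · exact Finset.disjoint_left.mp hSG hiS hi
      have hagG : ∀ i ∈ G, c₁ i = c₂ i := fun i hi => hagree i (hGsub hi)
      have hagU : ∀ i ∈ U, c₁ i = c₂ i := hdet c₁ h₁ c₂ h₂ hagG
      have hagΓ : ∀ i ∈ Γ, c₁ i = c₂ i := by
        intro i hi
        by_cases hiU : i ∈ U
        · exact hagU i hiU
        · refine hagree i ?_
          rw [Finset.mem_sdiff, Finset.mem_union, Finset.mem_union]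
          exact ⟨Or.inr hi, fun h => h.elim hiU
            (fun hiS => Finset.disjoint_left.mp hΓS hi hiS)⟩
      have hagS : ∀ i ∈ S, c₁ i = c₂ i := hrep c₁ h₁ c₂ h₂ hagΓ
      intro i hi
      rcases Finset.mem_union.mp hi with h | h
      · exact hagU i h
      · exact hagS i h

/-- distance bound `d_min(C) ≤ n − k + 1 − ℓ⌊(k − ℓ)/r⌋` for a `q`-ary code
with `(r, ℓ)`-cooperative locality and dimension `k = log_q |C|`. -/
theorem stmt_0 (q n r ℓ : ℕ) (hr : 0 < r) (hℓ : 0 < ℓ)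
    (C : Finset (Fin n → Fin q)) (hC : 2 ≤ C.card)
    (hloc : CoopLocal C r ℓ)
    (k : ℝ) (hk : k = Real.logb q C.card) :
    ∃ c₁ ∈ C, ∃ c₂ ∈ C, c₁ ≠ c₂ ∧
      (hammingDist c₁ c₂ : ℝ) ≤ n - k + 1 - ℓ * ⌊(k - ℓ) / r⌋ := by
  classical
  -- q ≥ 2
  have hCn : C.card ≤ q ^ n := by
    simpa [Fintype.card_fun] using Finset.card_le_univ C
  have hq : 1 < q := by
    by_contra h
    push_neg at h
    have : q ^ n ≤ 1 ^ n := Nat.pow_le_pow_left h n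
    simp at this; omega
  have hq1 : (1 : ℝ) < q := by exact_mod_cast hq
  have hC0 : 0 < C.card := by omega
  have hC0R : (0 : ℝ) < C.card := by exact_mod_cast hC0
  have hkpos : 0 < k := by
    rw [hk]; exact Real.logb_pos hq1 (by exact_mod_cast hC)
  set T : ℤ := ⌊(k - ℓ) / r⌋ with hT
  set t : ℕ := T.toNat with ht
  have hTt : (T : ℝ) ≤ (t : ℝ) := by exact_mod_cast Int.self_le_toNat T
  -- hypothesis for the construction
  have hhyp : ((t : ℝ) * r ≤ k - ℓ ∨ t = 0) := by
    rcases Nat.eq_zero_or_pos t with h | h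
    · exact Or.inr h
    · left
      have hT0 : 0 ≤ T := by
        by_contra hneg
        push_neg at hneg
        have : T.toNat = 0 := Int.toNat_of_nonpos hneg.le
        omega
      have htT : (t : ℝ) = (T : ℝ) := by
        rw [ht]; exact_mod_cast Int.toNat_of_nonneg hT0
      have hfl : (T : ℝ) ≤ (k - ℓ) / r := Int.floor_le _
      have hrpos : (0 : ℝ) < r := by exact_mod_cast hr
      rw [htT]
      calc (T : ℝ) * r ≤ ((k - ℓ) / r) * r := by nlinarith
        _ = k - ℓ := by field_simp
  obtain ⟨U, G, hdisj, hUcard, hGcard, hdet⟩ := coop_build C hloc k hq hC0 hk hr t hhyp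
  -- counting: k + t*ℓ ≤ n
  have hcount := coop_card_le C U G hdet
  have hUG : (U ∪ G).card = U.card + G.card := Finset.card_union_of_disjoint hdisj
  have hUGn : (U ∪ G).card ≤ n := by simpa using Finset.card_le_univ (U ∪ G)
  have hkle : k ≤ ((G.card + (n - (U ∪ G).card) : ℕ) : ℝ) := by
    rw [hk]; exact coop_logb_le hq hC0 hcount
  have hkle' : k ≤ (n : ℝ) - (t : ℝ) * ℓ := by
    have heq : ((G.card + (n - (U ∪ G).card) : ℕ) : ℝ) = (n : ℝ) - (t : ℝ) * ℓ := by
      rw [Nat.cast_add, Nat.cast_sub hUGn, hUG, hUcard]; push_cast; ring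
    linarith [heq ▸ hkle]
  -- s = ⌈k⌉ - 1
  have hceil : (1 : ℤ) ≤ ⌈k⌉ := by
    have h0 : (0 : ℤ) < ⌈k⌉ := Int.lt_ceil.mpr (by exact_mod_cast hkpos)
    omega
  set s : ℕ := (⌈k⌉ - 1).toNat with hs
  have hsZ : (s : ℤ) = ⌈k⌉ - 1 := Int.toNat_of_nonneg (by omega)
  have hsR : (s : ℝ) = (⌈k⌉ : ℝ) - 1 := by exact_mod_cast hsZ
  have hslt : (s : ℝ) < k := by
    have := Int.ceil_lt_add_one k
    rw [hsR]; linarith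
  have hsge : k - 1 ≤ (s : ℝ) := by
    have := Int.le_ceil k
    rw [hsR]; linarith
  -- G.card ≤ s
  have hGs : G.card ≤ s := by
    rcases Nat.eq_zero_or_pos t with h0 | hpos
    · have hG0 : G.card ≤ 0 := by simpa [h0] using hGcard
      omega
    · have h1 : (t : ℝ) * r ≤ k - ℓ := hhyp.resolve_right (by omega)
      have h2 : (G.card : ℝ) ≤ (t : ℝ) * r := by exact_mod_cast hGcard
      have hℓ1 : (1 : ℝ) ≤ ℓ := by exact_mod_cast hℓ
      have : (G.card : ℝ) ≤ (s : ℝ) := by linarith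
      exact_mod_cast this
  -- room for F
  have hstℓ : (s : ℝ) + (t : ℝ) * ℓ < n := by linarith
  have hstℓn : s + t * ℓ < n := by exact_mod_cast (by push_cast; linarith : ((s + t * ℓ : ℕ) : ℝ) < n)
  have hFroom : s - G.card ≤ ((U ∪ G)ᶜ).card := by
    rw [Finset.card_compl, Fintype.card_fin, hUG, hUcard]
    omega
  obtain ⟨F, hFsub, hFcard⟩ := Finset.exists_subset_card_eq hFroom
  have hFU : Disjoint F U := by
    refine Finset.disjoint_left.mpr fun i hiF hiU => ?_
    have := hFsub hiF; simp [Finset.mem_compl] at this; exact this.1 hiU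
  have hFG : Disjoint F G := by
    refine Finset.disjoint_left.mpr fun i hiF hiG => ?_
    have := hFsub hiF; simp [Finset.mem_compl] at this; exact this.2 hiG
  set G2 : Finset (Fin n) := G ∪ F with hG2
  have hG2card : G2.card = s := by
    rw [hG2, Finset.card_union_of_disjoint hFG.symm, hFcard]; omega
  -- pigeonhole
  have hpow : q ^ G2.card < C.card := by
    have h1 : (q : ℝ) ^ (s : ℝ) < C.card := by
      have := (Real.lt_logb_iff_rpow_lt hq1 hC0R).mp (by rw [← hk]; exact hslt)
      exact this
    rw [hG2card]
    have h2 : ((q ^ s : ℕ) : ℝ) < (C.card : ℝ) := by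
      rw [Nat.cast_pow, ← Real.rpow_natCast]; exact h1
    exact_mod_cast h2
  obtain ⟨c₁, h₁, c₂, h₂, hne, hagree⟩ := coop_pigeon C G2 hpow
  refine ⟨c₁, h₁, c₂, h₂, hne, ?_⟩
  -- agreement on the union
  have hagU : ∀ i ∈ U, c₁ i = c₂ i :=
    hdet c₁ h₁ c₂ h₂ (fun i hi => hagree i (Finset.mem_union_left _ hi))
  have hagE : ∀ i ∈ U ∪ G2, c₁ i = c₂ i := by
    intro i hi
    rcases Finset.mem_union.mp hi with h | h
    · exact hagU i h
    · exact hagree i h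
  have hham := coop_hamming c₁ c₂ (U ∪ G2) hagE
  have hUG2 : (U ∪ G2).card = t * ℓ + s := by
    rw [Finset.card_union_of_disjoint, hUcard, hG2card]
    rw [hG2, Finset.disjoint_union_right]
    exact ⟨hdisj, hFU.symm⟩
  have hhamR : (hammingDist c₁ c₂ : ℝ) ≤ (n : ℝ) - (t : ℝ) * ℓ - s := by
    rw [hUG2] at hham
    have : ((hammingDist c₁ c₂ + (t * ℓ + s) : ℕ) : ℝ) ≤ (n : ℝ) := by exact_mod_cast hham
    push_cast at this; linarith
  have hℓ0 : (0 : ℝ) ≤ ℓ := by positivity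
  have hTle : (ℓ : ℝ) * (T : ℝ) ≤ (ℓ : ℝ) * (t : ℝ) := by nlinarith
  linarith
end

section
/- Let C be a q-ary code of length n with dimension k = log_q |C|, containing at least two codewords, and suppose C has (r, ℓ)-cooperative locality for positive integers r and ℓ with r ≥ ℓ. Then the minimum distance of C satisfies d_min(C) ≤ n − k + 1 − ℓ·(⌈k/r⌉ − 1). -/
/-- distance bound `d_min(C) ≤ n − k + 1 − ℓ(⌈k/r⌉ − 1)` for a `q`-ary code
with `(r, ℓ)`-cooperative locality, `r ≥ ℓ`, and dimension `k = log_q |C|`. -/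
theorem stmt_1 (q n r ℓ : ℕ) (hr : 0 < r) (hℓ : 0 < ℓ) (hrℓ : ℓ ≤ r)
    (C : Finset (Fin n → Fin q)) (hC : 2 ≤ C.card)
    (hloc : CoopLocal C r ℓ)
    (k : ℝ) (hk : k = Real.logb q C.card) :
    ∃ c₁ ∈ C, ∃ c₂ ∈ C, c₁ ≠ c₂ ∧
      (hammingDist c₁ c₂ : ℝ) ≤ n - k + 1 - ℓ * (⌈k / r⌉ - 1) := by
  classical
  -- basic facts: q ≥ 2, k > 0
  have hqn : C.card ≤ q ^ n := by
    calc C.card ≤ (Finset.univ : Finset (Fin n → Fin q)).card :=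
          Finset.card_le_card (Finset.subset_univ C)
      _ = q ^ n := by simp [Finset.card_univ, Fintype.card_fun]
  have hq : 2 ≤ q := by
    by_contra h
    push_neg at h
    have h1 : q ≤ 1 := by omega
    have h2 := Nat.pow_le_pow_left h1 n
    simp only [one_pow] at h2
    omega
  have hq1 : (1:ℝ) < (q:ℝ) := by exact_mod_cast (by omega : 1 < q)
  have hCpos : (0:ℝ) < (C.card:ℝ) := by
    have : 0 < C.card := by omega
    exact_mod_cast this
  have hk0 : 0 < k := by
    rw [hk]
    exact Real.logb_pos hq1 (by exact_mod_cast (by omega : 1 < C.card))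
  -- counting lemma: if |C| ≤ q^e then k ≤ e
  have hlog : ∀ e : ℕ, C.card ≤ q ^ e → k ≤ (e:ℝ) := by
    intro e he
    rw [hk]
    have h1 : Real.logb q C.card ≤ Real.logb q ((q:ℝ)^e) :=
      Real.logb_le_logb_of_le hq1 hCpos (by exact_mod_cast he)
    calc Real.logb q C.card ≤ Real.logb q ((q:ℝ)^e) := h1
      _ = e := by rw [Real.logb_pow, Real.logb_self_eq_one hq1, mul_one]
  -- injectivity counting: a determining set has ≥ k coordinates
  have hcount : ∀ B : Finset (Fin n),
      (∀ c₁ ∈ C, ∀ c₂ ∈ C, (∀ i ∈ B, c₁ i = c₂ i) → c₁ = c₂) → k ≤ (B.card : ℝ) := by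
    intro B hB
    apply hlog
    have h1 : C.card ≤ (Finset.univ : Finset ({x // x ∈ B} → Fin q)).card := by
      apply Finset.card_le_card_of_injOn (fun c => fun i : {x // x ∈ B} => c i.1)
      · intro a _; exact Finset.mem_univ _
      · intro c₁ h₁ c₂ h₂ hf
        exact hB c₁ h₁ c₂ h₂ (fun i hi => congrFun hf ⟨i, hi⟩)
    calc C.card ≤ _ := h1
      _ = q ^ B.card := by
        rw [Finset.card_univ, Fintype.card_fun, Fintype.card_coe, Fintype.card_fin]
  -- define t
  have hkr : (0:ℝ) < k / (r:ℝ) := div_pos hk0 (by exact_mod_cast hr)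
  have hceil1 : 1 ≤ ⌈k / (r:ℝ)⌉ := Int.ceil_pos.mpr hkr
  set t : ℕ := (⌈k / (r:ℝ)⌉ - 1).toNat with htdef
  have htcast : (t:ℝ) = ((⌈k / (r:ℝ)⌉ : ℤ) : ℝ) - 1 := by
    have h0 : ((t:ℕ):ℤ) = ⌈k / (r:ℝ)⌉ - 1 := by
      rw [htdef]; exact Int.toNat_of_nonneg (by omega)
    have h1 := congrArg (Int.cast : ℤ → ℝ) h0
    push_cast at h1
    linarith
  have hrpos : (0:ℝ) < (r:ℝ) := by exact_mod_cast hr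
  have htr : (t:ℝ) * r < k := by
    have h1 : ((⌈k / (r:ℝ)⌉ : ℤ) : ℝ) < k / r + 1 := Int.ceil_lt_add_one _
    have h2 : (t:ℝ) < k / r := by rw [htcast]; linarith
    calc (t:ℝ) * r < (k / r) * r := by exact mul_lt_mul_of_pos_right h2 hrpos
      _ = k := div_mul_cancel₀ k (ne_of_gt hrpos)
  -- main induction
  have main : ∀ i : ℕ, i ≤ t → ∃ A D : Finset (Fin n), D ⊆ A ∧ D.card ≤ i * r ∧
      A.card = D.card + i * ℓ ∧
      (∀ c₁ ∈ C, ∀ c₂ ∈ C, (∀ j ∈ D, c₁ j = c₂ j) → ∀ j ∈ A, c₁ j = c₂ j) := by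
    intro i
    induction i with
    | zero =>
      intro _
      exact ⟨∅, ∅, Finset.Subset.refl _, by simp, by simp, by simp⟩
    | succ i ih =>
      intro hi1
      obtain ⟨A, D, hDA, hDc, hAc, hdet⟩ := ih (by omega)
      by_cases hS : ℓ ≤ Aᶜ.card
      · obtain ⟨S, hSA, hScard⟩ := Finset.exists_subset_card_eq hS
        obtain ⟨Γ, hdisj, hΓr, hrep⟩ := hloc S hScard
        have hAS : Disjoint A S :=
          Finset.disjoint_left.mpr (fun a ha hs => (Finset.mem_compl.mp (hSA hs)) ha)
        have hUG : Disjoint (A ∪ S) (Γ \ A) := by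
          rw [Finset.disjoint_left]
          intro a ha hg
          rcases Finset.mem_union.mp ha with h | h
          · exact (Finset.mem_sdiff.mp hg).2 h
          · exact (Finset.disjoint_left.mp hdisj (Finset.mem_sdiff.mp hg).1) h
        have hDG : Disjoint D (Γ \ A) :=
          Finset.disjoint_left.mpr fun a ha hg => (Finset.mem_sdiff.mp hg).2 (hDA ha)
        have hGr : (Γ \ A).card ≤ r := le_trans (Finset.card_le_card (Finset.sdiff_subset)) hΓr
        refine ⟨A ∪ S ∪ (Γ \ A), D ∪ (Γ \ A), ?_, ?_, ?_, ?_⟩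
        · intro x hx
          rcases Finset.mem_union.mp hx with h | h
          · exact Finset.mem_union_left _ (Finset.mem_union_left _ (hDA h))
          · exact Finset.mem_union_right _ h
        · rw [Finset.card_union_of_disjoint hDG]
          have : (i+1) * r = i * r + r := by ring
          omega
        · rw [Finset.card_union_of_disjoint hUG, Finset.card_union_of_disjoint hAS,
            Finset.card_union_of_disjoint hDG, hScard]
          have h1 : (i+1) * ℓ = i * ℓ + ℓ := by ring
          omega
        · intro c₁ h₁ c₂ h₂ hagree j hj
          have hD : ∀ x ∈ D, c₁ x = c₂ x := fun x hx => hagree x (Finset.mem_union_left _ hx)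
          have hA : ∀ x ∈ A, c₁ x = c₂ x := hdet c₁ h₁ c₂ h₂ hD
          have hG : ∀ x ∈ Γ, c₁ x = c₂ x := by
            intro x hx
            by_cases hxA : x ∈ A
            · exact hA x hxA
            · exact hagree x (Finset.mem_union_right _ (Finset.mem_sdiff.mpr ⟨hx, hxA⟩))
          have hSag : ∀ x ∈ S, c₁ x = c₂ x := hrep c₁ h₁ c₂ h₂ hG
          rcases Finset.mem_union.mp hj with hj | hj
          · rcases Finset.mem_union.mp hj with hj | hj
            · exact hA j hj
            · exact hSag j hj
          · exact hG j (Finset.mem_sdiff.mp hj).1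
      · exfalso
        push_neg at hS
        have hdetall : ∀ c₁ ∈ C, ∀ c₂ ∈ C, (∀ x ∈ D ∪ Aᶜ, c₁ x = c₂ x) → c₁ = c₂ := by
          intro c₁ h₁ c₂ h₂ hag
          funext j
          by_cases hj : j ∈ A
          · exact hdet c₁ h₁ c₂ h₂ (fun x hx => hag x (Finset.mem_union_left _ hx)) j hj
          · exact hag j (Finset.mem_union_right _ (Finset.mem_compl.mpr hj))
        have hkle := hcount _ hdetall
        have h3 : (D ∪ Aᶜ).card ≤ D.card + Aᶜ.card := Finset.card_union_le _ _
        have hmul : (i+1) * r ≤ t * r := Nat.mul_le_mul_right _ hi1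
        have hexp : (i+1) * r = i * r + r := by ring
        have h2 : (D ∪ Aᶜ).card < t * r := by linarith
        have h4 : ((D ∪ Aᶜ).card : ℝ) < (t:ℝ) * r := by exact_mod_cast h2
        linarith
  obtain ⟨A, D, hDA, hDc, hAc, hdet⟩ := main t le_rfl
  -- define m
  have hceilk : 1 ≤ ⌈k⌉ := Int.ceil_pos.mpr hk0
  set m : ℕ := (⌈k⌉ - 1).toNat with hmdef
  have hmcast : (m:ℝ) = ((⌈k⌉ : ℤ) : ℝ) - 1 := by
    have h0 : ((m:ℕ):ℤ) = ⌈k⌉ - 1 := by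
      rw [hmdef]; exact Int.toNat_of_nonneg (by omega)
    have h1 := congrArg (Int.cast : ℤ → ℝ) h0
    push_cast at h1
    linarith
  have hmk : (m:ℝ) < k := by
    have := Int.ceil_lt_add_one k
    rw [hmcast]; linarith
  have hkm : k ≤ (m:ℝ) + 1 := by
    have := Int.le_ceil k
    rw [hmcast]; linarith
  have hDk : ((D.card:ℕ) : ℝ) < k := by
    have h1 : (D.card : ℝ) ≤ ((t * r : ℕ) : ℝ) := by exact_mod_cast hDc
    push_cast at h1
    linarith
  have hDm : D.card ≤ m := by
    have h1 : (D.card:ℝ) < (m:ℝ) + 1 := lt_of_lt_of_le hDk hkm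
    have h2 : D.card < m + 1 := by exact_mod_cast h1
    omega
  -- room for padding
  have hroom : m - D.card ≤ Aᶜ.card := by
    by_contra hcon
    push_neg at hcon
    have hdetall : ∀ c₁ ∈ C, ∀ c₂ ∈ C, (∀ x ∈ D ∪ Aᶜ, c₁ x = c₂ x) → c₁ = c₂ := by
      intro c₁ h₁ c₂ h₂ hag
      funext j
      by_cases hj : j ∈ A
      · exact hdet c₁ h₁ c₂ h₂ (fun x hx => hag x (Finset.mem_union_left _ hx)) j hj
      · exact hag j (Finset.mem_union_right _ (Finset.mem_compl.mpr hj))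
    have hkle := hcount _ hdetall
    have h3 : (D ∪ Aᶜ).card ≤ D.card + Aᶜ.card := Finset.card_union_le _ _
    have h2 : (D ∪ Aᶜ).card < m := by omega
    have h4 : ((D ∪ Aᶜ).card : ℝ) < (m:ℝ) := by exact_mod_cast h2
    linarith
  obtain ⟨E, hEA, hEcard⟩ := Finset.exists_subset_card_eq hroom
  have hAE : Disjoint A E :=
    Finset.disjoint_left.mpr (fun a ha he => (Finset.mem_compl.mp (hEA he)) ha)
  have hDE : Disjoint D E :=
    Finset.disjoint_left.mpr (fun a ha he => (Finset.mem_compl.mp (hEA he)) (hDA ha))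
  have hBcard : (D ∪ E).card = m := by
    rw [Finset.card_union_of_disjoint hDE]
    omega
  -- pigeonhole
  have hqm : q ^ m < C.card := by
    by_contra hcon
    push_neg at hcon
    exact absurd (hlog m hcon) (not_le.mpr hmk)
  have hcardlt : (Finset.univ : Finset ({x // x ∈ D ∪ E} → Fin q)).card < C.card := by
    calc (Finset.univ : Finset ({x // x ∈ D ∪ E} → Fin q)).card
        = q ^ m := by
          rw [Finset.card_univ, Fintype.card_fun, Fintype.card_coe, Fintype.card_fin, hBcard]
      _ < C.card := hqm
  obtain ⟨c₁, h₁, c₂, h₂, hne, heq⟩ :=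
    Finset.exists_ne_map_eq_of_card_lt_of_maps_to hcardlt
      (f := fun c => fun i : {x // x ∈ D ∪ E} => c i.1)
      (fun a _ => Finset.mem_univ _)
  refine ⟨c₁, h₁, c₂, h₂, hne, ?_⟩
  have hagB : ∀ x ∈ D ∪ E, c₁ x = c₂ x := fun x hx => congrFun heq ⟨x, hx⟩
  have hagT : ∀ x ∈ A ∪ E, c₁ x = c₂ x := by
    intro x hx
    rcases Finset.mem_union.mp hx with h | h
    · exact hdet c₁ h₁ c₂ h₂ (fun y hy => hagB y (Finset.mem_union_left _ hy)) x h
    · exact hagB x (Finset.mem_union_right _ h)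
  -- distance bound
  have hdist : hammingDist c₁ c₂ ≤ (A ∪ E)ᶜ.card := by
    apply Finset.card_le_card
    intro x hx
    simp only [Finset.mem_filter, Finset.mem_univ, true_and] at hx
    rw [Finset.mem_compl]
    intro hxT
    exact hx (hagT x hxT)
  have hTcard : (A ∪ E).card = m + t * ℓ := by
    rw [Finset.card_union_of_disjoint hAE]
    obtain ⟨w, hw⟩ : ∃ w, w = t * ℓ := ⟨_, rfl⟩
    rw [← hw] at hAc ⊢
    omega
  have hTn : (A ∪ E).card ≤ n := by
    calc (A ∪ E).card ≤ (Finset.univ : Finset (Fin n)).card :=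
          Finset.card_le_card (Finset.subset_univ _)
      _ = n := by simp
  have hcompl : ((A ∪ E)ᶜ.card : ℝ) = (n:ℝ) - ((m:ℝ) + (t:ℝ) * ℓ) := by
    rw [Finset.card_compl]
    rw [Nat.cast_sub (by simpa using hTn)]
    rw [hTcard]
    push_cast
    simp
  have hfin : (hammingDist c₁ c₂ : ℝ) ≤ (n:ℝ) - ((m:ℝ) + (t:ℝ) * ℓ) := by
    rw [← hcompl]
    exact_mod_cast hdist
  have hlt : ((⌈k / (r:ℝ)⌉ : ℤ) : ℝ) - 1 = (t:ℝ) := htcast.symm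
  rw [hlt]
  have hcomm : (ℓ:ℝ) * (t:ℝ) = (t:ℝ) * (ℓ:ℝ) := mul_comm _ _
  linarith
end

section
/- Let C be a q-ary code of length n with dimension k = log_q |C|, containing at least two codewords, and suppose C has (r, ℓ)-cooperative locality for positive integers r and ℓ. Then the rate of C is bounded as k/n ≤ r/(r + ℓ) + (1/n)·(ℓ²/r). -/
section Determines

variable {ι α : Type*}

def Determines (C : Finset (ι → α)) (Γ S : Finset ι) : Prop :=
  ∀ c₁ ∈ C, ∀ c₂ ∈ C, (∀ i ∈ Γ, c₁ i = c₂ i) → ∀ i ∈ S, c₁ i = c₂ i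

variable {C : Finset (ι → α)} {Γ Γ' S S' T : Finset ι}

theorem Determines.mono (h : Determines C Γ S) (hΓ : Γ ⊆ Γ') (hS : S' ⊆ S) :
    Determines C Γ' S' :=
  fun c₁ h₁ c₂ h₂ hagree i hi => h c₁ h₁ c₂ h₂ (fun j hj => hagree j (hΓ hj)) i (hS hi)

theorem Determines.trans (hΓS : Determines C Γ S) (hST : Determines C S T) :
    Determines C Γ T :=
  fun c₁ h₁ c₂ h₂ hagree => hST c₁ h₁ c₂ h₂ (hΓS c₁ h₁ c₂ h₂ hagree)

theorem Determines.union_self [DecidableEq ι] (h : Determines C Γ S) :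
    Determines C Γ (Γ ∪ S) := by
  intro c₁ h₁ c₂ h₂ hagree i hi
  rcases Finset.mem_union.mp hi with hi | hi
  exacts [hagree i hi, h c₁ h₁ c₂ h₂ hagree i hi]

theorem Determines.eq_of_agree [Fintype ι] (h : Determines C Γ Finset.univ)
    {c₁ c₂ : ι → α} (h₁ : c₁ ∈ C) (h₂ : c₂ ∈ C) (hagree : ∀ i ∈ Γ, c₁ i = c₂ i) : c₁ = c₂ :=
  funext fun i => h c₁ h₁ c₂ h₂ hagree i (Finset.mem_univ i)

theorem Determines.card_le [Fintype ι] [Fintype α] (h : Determines C Γ Finset.univ) :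
    C.card ≤ Fintype.card α ^ Γ.card := by
  classical
  calc C.card ≤ (Finset.univ : Finset (Γ → α)).card :=
        Finset.card_le_card_of_injOn (fun c i => c i) (fun _ _ => Finset.mem_coe.mpr
          (Finset.mem_univ _)) fun c₁ h₁ c₂ h₂ heq =>
          h.eq_of_agree h₁ h₂ fun i hi => congrFun heq ⟨i, hi⟩
    _ = Fintype.card α ^ Γ.card := by simp

end Determines

/-- `t` rounds of the greedy choice need `(t - 1) (r + ℓ) + ℓ` coordinates outside `A`. -/
theorem exists_determined_of_coopLocal {n q r ℓ : ℕ} {C : Finset (Fin n → Fin q)}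
    (hloc : CoopLocal C r ℓ) (t : ℕ) :
    ∀ A : Finset (Fin n), A.card + t * (r + ℓ) ≤ n + r →
      ∃ D : Finset (Fin n), Disjoint D A ∧ D.card = t * ℓ ∧ Determines C Dᶜ Finset.univ := by
  induction t with
  | zero => exact fun A _ => ⟨∅, by simp, by simp, fun c₁ _ c₂ _ h i _ => h i (by simp)⟩
  | succ t ih =>
    intro A hA
    have hstep : (t + 1) * (r + ℓ) = t * (r + ℓ) + (r + ℓ) := by ring
    have hroom : ℓ ≤ Aᶜ.card := by
      rw [Finset.card_compl, Fintype.card_fin]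
      omega
    obtain ⟨S, hSA, hScard⟩ := Finset.exists_subset_card_eq hroom
    obtain ⟨Γ, hΓS, hΓcard, hΓ : Determines C Γ S⟩ := hloc S hScard
    obtain ⟨D, hD, hDcard, hDdet⟩ := ih (A ∪ S ∪ Γ) (by
      have := Finset.card_union_le (A ∪ S) Γ
      have := Finset.card_union_le A S
      omega)
    have hSD : Disjoint S D := by
      refine (hD.mono_right ?_).symm
      exact Finset.subset_union_right.trans Finset.subset_union_left
    refine ⟨S ∪ D, ?_, ?_, ?_⟩
    · refine Finset.disjoint_union_left.mpr ⟨?_, hD.mono_right ?_⟩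
      · exact Finset.disjoint_left.mpr fun i hi => Finset.mem_compl.mp (hSA hi)
      · exact Finset.subset_union_left.trans Finset.subset_union_left
    · rw [Finset.card_union_of_disjoint hSD, hScard, hDcard]
      ring
    · have hΓout : Γ ⊆ (S ∪ D)ᶜ := fun i hi => by
        have hiD : i ∉ D := Finset.disjoint_right.mp hD (Finset.mem_union_right _ hi)
        simp [Finset.disjoint_left.mp hΓS hi, hiD]
      have hDout : Dᶜ ⊆ (S ∪ D)ᶜ ∪ S := fun i hi => by
        simp only [Finset.mem_compl, Finset.mem_union] at hi ⊢
        tauto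
      exact ((hΓ.mono hΓout subset_rfl).union_self).trans (hDdet.mono hDout subset_rfl)

theorem logb_natCast_le_of_le_pow {q m e : ℕ} (h : m ≤ q ^ e) : Real.logb q m ≤ e := by
  rcases Nat.eq_zero_or_pos m with rfl | hm
  · simp
  refine div_le_of_le_mul₀ (Real.log_natCast_nonneg q) (Nat.cast_nonneg e) ?_
  rw [← Real.log_pow]
  exact Real.log_le_log (by exact_mod_cast hm) (by exact_mod_cast h)

theorem div_le_rate_bound {k n t r ℓ : ℝ} (hr : 0 < r) (hℓ : 0 ≤ ℓ) (hn : 0 ≤ n)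
    (hcover : n ≤ t * (r + ℓ) + ℓ) (hk : k ≤ n - t * ℓ) :
    k / n ≤ r / (r + ℓ) + 1 / n * (ℓ ^ 2 / r) := by
  rcases hn.eq_or_lt with rfl | hn
  · simp only [div_zero, zero_mul, add_zero]
    positivity
  have hrℓ : 0 < r + ℓ := by linarith
  rw [div_le_iff₀ hn]
  calc k ≤ n - t * ℓ := hk
    _ ≤ (n * r + ℓ ^ 2) / (r + ℓ) := by
      rw [le_div_iff₀ hrℓ]
      nlinarith
    _ = r / (r + ℓ) * n + ℓ ^ 2 / (r + ℓ) := by field_simp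
    _ ≤ r / (r + ℓ) * n + ℓ ^ 2 / r := by gcongr; linarith
    _ = (r / (r + ℓ) + 1 / n * (ℓ ^ 2 / r)) * n := by field_simp

theorem stmt_2_general (q n r ℓ : ℕ) (hr : 0 < r)
    (C : Finset (Fin n → Fin q))
    (hloc : CoopLocal C r ℓ)
    (k : ℝ) (hk : k = Real.logb q C.card) :
    k / n ≤ r / (r + ℓ) + (1 / n) * ((ℓ : ℝ) ^ 2 / r) := by
  obtain ⟨t, hfit, hcover⟩ : ∃ t, t * (r + ℓ) ≤ n + r ∧ n ≤ t * (r + ℓ) + ℓ :=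
    ⟨(n + r) / (r + ℓ), Nat.div_mul_le_self _ _, by
      have := Nat.lt_div_mul_add (a := n + r) (b := r + ℓ) (by omega)
      omega⟩
  obtain ⟨D, -, hDcard, hD⟩ := exists_determined_of_coopLocal hloc t ∅ (by simpa using hfit)
  have hcard : C.card ≤ q ^ (n - t * ℓ) := by
    simpa [Finset.card_compl, hDcard] using hD.card_le
  have htℓ : t * ℓ ≤ n := by simpa [hDcard] using D.card_le_univ
  have hk' : k ≤ ((n - t * ℓ : ℕ) : ℝ) := hk ▸ logb_natCast_le_of_le_pow hcard
  rw [Nat.cast_sub htℓ, Nat.cast_mul] at hk'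
  exact div_le_rate_bound (by exact_mod_cast hr) (Nat.cast_nonneg ℓ) (Nat.cast_nonneg n)
    (by exact_mod_cast hcover) hk'

/-- rate bound `k/n ≤ r/(r + ℓ) + (1/n)(ℓ²/r)` for a `q`-ary code
with `(r, ℓ)`-cooperative locality and dimension `k = log_q |C|`. -/
theorem stmt_2 (q n r ℓ : ℕ) (hr : 0 < r) (hℓ : 0 < ℓ)
    (C : Finset (Fin n → Fin q)) (hC : 2 ≤ C.card)
    (hloc : CoopLocal C r ℓ)
    (k : ℝ) (hk : k = Real.logb q C.card) :
    k / n ≤ r / (r + ℓ) + (1 / n) * ((ℓ : ℝ) ^ 2 / r) :=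
  stmt_2_general q n r ℓ hr C hloc k hk
end

section
/- Let C be a q-ary code of length n with dimension k = log_q |C|, containing at least two codewords, with minimum distance d = d_min(C), and suppose C has (r, ℓ)-cooperative locality for positive integers r and ℓ. Then for every positive integer t with t ≤ ⌊n/(r+ℓ)⌋ and t ≤ ⌊(k−1)/r⌋, one has k ≤ r·t + log_q A_q(n − t(r+ℓ), d), where A_q(m, d) denotes the maximum cardinality of a q-ary code of length m with minimum distance at least d. -/
/-- `Aq q m d` is the maximum cardinality of a `q`-ary code of length `m` whose distinct
codewords pairwise differ in at least `d` coordinates. -/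
noncomputable def Aq (q m d : ℕ) : ℕ :=
  sSup {s : ℕ | ∃ C : Finset (Fin m → Fin q), C.card = s ∧
    ∀ c₁ ∈ C, ∀ c₂ ∈ C, c₁ ≠ c₂ → d ≤ hammingDist c₁ c₂}

lemma coop_build_s4 {n q : ℕ} (C : Finset (Fin n → Fin q)) (r ℓ : ℕ)
    (hloc : CoopLocal C r ℓ) :
    ∀ t : ℕ, t * (r + ℓ) ≤ n →
    ∃ A B : Finset (Fin n), Disjoint A B ∧ A.card = t * ℓ ∧ B.card ≤ t * r ∧
      ∀ c₁ ∈ C, ∀ c₂ ∈ C, (∀ i ∈ B, c₁ i = c₂ i) → ∀ i ∈ A ∪ B, c₁ i = c₂ i := by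
  intro t
  induction t with
  | zero => exact fun _ => ⟨∅, ∅, by simp, by simp, by simp, by simp⟩
  | succ t ih =>
    intro h
    obtain ⟨A, B, hdisj, hA, hB, hrec⟩ := ih (le_trans (by nlinarith) h)
    have hABcard : (A ∪ B).card ≤ t * (r + ℓ) := by
      have := Finset.card_union_le A B
      nlinarith
    have hcompl : ℓ ≤ ((A ∪ B)ᶜ).card := by
      rw [Finset.card_compl, Fintype.card_fin]
      have h' : t * (r + ℓ) + (r + ℓ) ≤ n := by nlinarith
      omega
    obtain ⟨S, hSsub, hScard⟩ := Finset.exists_subset_card_eq hcompl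
    obtain ⟨Γ, hΓS, hΓr, hΓrec⟩ := hloc S hScard
    have hSA : Disjoint S A := by
      refine Finset.disjoint_left.2 fun x hx hxA => ?_
      have := hSsub hx
      simp [Finset.mem_compl] at this
      exact this.1 hxA
    have hSB : Disjoint S B := by
      refine Finset.disjoint_left.2 fun x hx hxB => ?_
      have := hSsub hx
      simp [Finset.mem_compl] at this
      exact this.2 hxB
    refine ⟨A ∪ S, B ∪ (Γ \ (A ∪ S)), ?_, ?_, ?_, ?_⟩
    · rw [Finset.disjoint_union_left, Finset.disjoint_union_right, Finset.disjoint_union_right]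
      exact ⟨⟨hdisj, Finset.disjoint_sdiff.mono_right (by exact fun x hx => hx) |>.mono_left
        Finset.subset_union_left⟩,
        ⟨hSB, Finset.disjoint_sdiff.mono_left Finset.subset_union_right⟩⟩
    · rw [Finset.card_union_of_disjoint hSA.symm, hA, hScard]; ring
    · have h1 : (Γ \ (A ∪ S)).card ≤ r := le_trans (Finset.card_le_card (Finset.sdiff_subset)) hΓr
      have := Finset.card_union_le B (Γ \ (A ∪ S))
      nlinarith
    · intro c₁ hc₁ c₂ hc₂ hagr i hi
      have hagrB : ∀ i ∈ B, c₁ i = c₂ i := fun j hj => hagr j (Finset.mem_union_left _ hj)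
      have hAB : ∀ i ∈ A ∪ B, c₁ i = c₂ i := hrec c₁ hc₁ c₂ hc₂ hagrB
      have hΓagr : ∀ i ∈ Γ, c₁ i = c₂ i := by
        intro j hj
        by_cases hjAS : j ∈ A ∪ S
        · rcases Finset.mem_union.1 hjAS with hjA | hjS
          · exact hAB j (Finset.mem_union_left _ hjA)
          · exact absurd hjS (Finset.disjoint_left.1 hΓS hj)
        · exact hagr j (Finset.mem_union_right _ (Finset.mem_sdiff.2 ⟨hj, hjAS⟩))
      have hSagr : ∀ i ∈ S, c₁ i = c₂ i := hΓrec c₁ hc₁ c₂ hc₂ hΓagr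
      rcases Finset.mem_union.1 hi with hi | hi
      · rcases Finset.mem_union.1 hi with hi | hi
        · exact hAB i (Finset.mem_union_left _ hi)
        · exact hSagr i hi
      · rcases Finset.mem_union.1 hi with hi | hi
        · exact hAB i (Finset.mem_union_right _ hi)
        · exact hΓagr i (Finset.mem_sdiff.1 hi).1

/-- for a `q`-ary code `C` with `(r, ℓ)`-cooperative locality, dimension
`k = log_q |C|` and minimum distance `d`, for every `1 ≤ t ≤ min(⌊n/(r+ℓ)⌋, ⌊(k−1)/r⌋)`
we have `k ≤ rt + log_q A_q(n − t(r+ℓ), d)`. -/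
theorem stmt_4 (q n r ℓ : ℕ) (hr : 0 < r) (hℓ : 0 < ℓ)
    (C : Finset (Fin n → Fin q)) (hC : 2 ≤ C.card)
    (hloc : CoopLocal C r ℓ)
    (k : ℝ) (hk : k = Real.logb q C.card)
    (d : ℕ)
    (hd : d = sInf {m : ℕ | ∃ c₁ ∈ C, ∃ c₂ ∈ C, c₁ ≠ c₂ ∧ hammingDist c₁ c₂ = m})
    (t : ℕ) (ht : 1 ≤ t) (ht₁ : t ≤ n / (r + ℓ)) (ht₂ : (t : ℤ) ≤ ⌊(k - 1) / (r : ℝ)⌋) :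
    k ≤ r * t + Real.logb q (Aq q (n - t * (r + ℓ)) d) := by
  classical
  -- q ≥ 2
  have hq : 2 ≤ q := by
    by_contra hq
    push_neg at hq
    have h1 : C.card ≤ Fintype.card (Fin n → Fin q) := Finset.card_le_univ C
    rw [Fintype.card_fun, Fintype.card_fin, Fintype.card_fin] at h1
    have : q ^ n ≤ 1 ^ n := Nat.pow_le_pow_left (by omega) n
    simp at this
    omega
  have hn : t * (r + ℓ) ≤ n := (Nat.le_div_iff_mul_le (by omega)).1 ht₁
  set m := n - t * (r + ℓ) with hm
  obtain ⟨A, B, hdisj, hA, hB, hrec⟩ := coop_build_s4 C r ℓ hloc t hn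
  have hABcard : (A ∪ B).card ≤ t * (r + ℓ) := by
    have := Finset.card_union_le A B
    nlinarith
  -- extend A ∪ B to a set T of size t*(r+ℓ)
  obtain ⟨T, hABT, -, hTcard⟩ := Finset.exists_subsuperset_card_eq (Finset.subset_univ (A ∪ B))
    hABcard (by rw [Finset.card_univ, Fintype.card_fin]; exact hn)
  set B' : Finset (Fin n) := T \ A with hB'
  have hAT : A ⊆ T := (Finset.subset_union_left).trans hABT
  have hBB' : B ⊆ B' := fun x hx => Finset.mem_sdiff.2
    ⟨hABT (Finset.mem_union_right _ hx), fun hxA => Finset.disjoint_left.1 hdisj hxA hx⟩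
  have hB'card : B'.card = t * r := by
    rw [hB', Finset.card_sdiff_of_subset hAT, hTcard, hA]
    have : t * (r + ℓ) = t * r + t * ℓ := by ring
    omega
  -- recovery: agreeing on B' implies agreeing on T
  have hrec' : ∀ c₁ ∈ C, ∀ c₂ ∈ C, (∀ i ∈ B', c₁ i = c₂ i) → ∀ i ∈ T, c₁ i = c₂ i := by
    intro c₁ hc₁ c₂ hc₂ hagr i hiT
    by_cases hiA : i ∈ A
    · exact hrec c₁ hc₁ c₂ hc₂ (fun j hj => hagr j (hBB' hj)) i (Finset.mem_union_left _ hiA)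
    · exact hagr i (Finset.mem_sdiff.2 ⟨hiT, hiA⟩)
  -- the equivalence between Tᶜ and Fin m
  have hTc : Fintype.card {x // x ∈ Tᶜ} = m := by
    rw [Fintype.card_coe, Finset.card_compl, Fintype.card_fin, hTcard]
  let e : {x // x ∈ Tᶜ} ≃ Fin m := Fintype.equivFinOfCardEq hTc
  let f : (Fin n → Fin q) → (Fin m → Fin q) := fun c j => c ((e.symm j) : Fin n)
  -- restriction-to-B' map with default value 0 elsewhere
  let v0 : Fin q := ⟨0, by omega⟩
  let ρ : (Fin n → Fin q) → (Fin n → Fin q) := fun c i => if i ∈ B' then c i else v0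
  have himg : (C.image ρ).card ≤ q ^ (t * r) := by
    have hmaps : ∀ g ∈ C.image ρ, (fun (x : {i // i ∈ B'}) => g x.1) ∈
        (Finset.univ : Finset ({i // i ∈ B'} → Fin q)) := fun _ _ => Finset.mem_univ _
    have hinj : Set.InjOn (fun (g : Fin n → Fin q) (x : {i // i ∈ B'}) => g x.1) ↑(C.image ρ) := by
      intro g₁ hg₁ g₂ hg₂ hgg
      obtain ⟨c₁, -, rfl⟩ := Finset.mem_image.1 hg₁
      obtain ⟨c₂, -, rfl⟩ := Finset.mem_image.1 hg₂
      funext i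
      by_cases hi : i ∈ B'
      · have := congrFun hgg ⟨i, hi⟩
        simpa using this
      · simp [ρ, hi]
    have := Finset.card_le_card_of_injOn _ hmaps hinj
    rwa [Finset.card_univ, Fintype.card_fun, Fintype.card_coe, Fintype.card_fin, hB'card] at this
  have hCne : C.Nonempty := Finset.card_pos.1 (by omega)
  obtain ⟨v₁, hv₁mem, hv₁max⟩ := Finset.exists_max_image (C.image ρ)
    (fun v => (C.filter (fun c => ρ c = v)).card) ((hCne.image ρ))
  set C₀ : Finset (Fin n → Fin q) := C.filter (fun c => ρ c = v₁) with hC₀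
  have hC₀sub : C₀ ⊆ C := Finset.filter_subset _ _
  have hCbound : C.card ≤ q ^ (t * r) * C₀.card := by
    have hsum : C.card = ∑ v ∈ C.image ρ, (C.filter (fun c => ρ c = v)).card :=
      Finset.card_eq_sum_card_fiberwise (fun x hx => Finset.mem_image_of_mem ρ hx)
    calc C.card = ∑ v ∈ C.image ρ, (C.filter (fun c => ρ c = v)).card := hsum
      _ ≤ ∑ _v ∈ C.image ρ, C₀.card := Finset.sum_le_sum (fun v hv => hv₁max v hv)
      _ = (C.image ρ).card * C₀.card := by rw [Finset.sum_const, smul_eq_mul]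
      _ ≤ q ^ (t * r) * C₀.card := Nat.mul_le_mul_right _ himg
  -- codewords in C₀ agree on B'
  have hC₀agr : ∀ c₁ ∈ C₀, ∀ c₂ ∈ C₀, ∀ i ∈ B', c₁ i = c₂ i := by
    intro c₁ hc₁ c₂ hc₂ i hi
    have h1 := (Finset.mem_filter.1 hc₁).2
    have h2 := (Finset.mem_filter.1 hc₂).2
    have := congrFun (h1.trans h2.symm) i
    simpa [ρ, hi] using this
  -- hence agree on T
  have hC₀T : ∀ c₁ ∈ C₀, ∀ c₂ ∈ C₀, ∀ i ∈ T, c₁ i = c₂ i := fun c₁ hc₁ c₂ hc₂ =>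
    hrec' c₁ (hC₀sub hc₁) c₂ (hC₀sub hc₂) (hC₀agr c₁ hc₁ c₂ hc₂)
  -- f is injective on C₀
  have hfinj : Set.InjOn f C₀ := by
    intro c₁ hc₁ c₂ hc₂ hf
    funext i
    by_cases hi : i ∈ T
    · exact hC₀T c₁ hc₁ c₂ hc₂ i hi
    · have : i ∈ Tᶜ := Finset.mem_compl.2 hi
      have := congrFun hf (e ⟨i, this⟩)
      simpa [f, Equiv.symm_apply_apply] using this
  set D : Finset (Fin m → Fin q) := C₀.image f with hD
  have hDcard : D.card = C₀.card := Finset.card_image_of_injOn hfinj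
  -- distance of D
  have hDdist : ∀ d₁ ∈ D, ∀ d₂ ∈ D, d₁ ≠ d₂ → d ≤ hammingDist d₁ d₂ := by
    intro d₁ hd₁ d₂ hd₂ hne
    obtain ⟨c₁, hc₁, rfl⟩ := Finset.mem_image.1 hd₁
    obtain ⟨c₂, hc₂, rfl⟩ := Finset.mem_image.1 hd₂
    have hcne : c₁ ≠ c₂ := fun h => hne (by rw [h])
    have hdle : d ≤ hammingDist c₁ c₂ := by
      rw [hd]
      exact Nat.sInf_le ⟨c₁, hC₀sub hc₁, c₂, hC₀sub hc₂, hcne, rfl⟩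
    refine hdle.trans ?_
    -- hammingDist c₁ c₂ ≤ hammingDist (f c₁) (f c₂)
    have hdiffTc : ∀ i, c₁ i ≠ c₂ i → i ∈ Tᶜ := fun i hne' =>
      Finset.mem_compl.2 (fun hiT => hne' (hC₀T c₁ hc₁ c₂ hc₂ i hiT))
    rw [hammingDist, hammingDist]
    rcases Finset.eq_empty_or_nonempty {i | c₁ i ≠ c₂ i} with he | ⟨i₀, hi₀⟩
    · simp [he]
    · have hi₀' : c₁ i₀ ≠ c₂ i₀ := by simpa using hi₀
      have hi₀Tc : i₀ ∈ Tᶜ := hdiffTc i₀ hi₀'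
      refine Finset.card_le_card_of_injOn
        (fun i => if h : i ∈ Tᶜ then e ⟨i, h⟩ else e ⟨i₀, hi₀Tc⟩) ?_ ?_
      · intro i hi
        have hi' : c₁ i ≠ c₂ i := by simpa using hi
        have hiTc := hdiffTc i hi'
        simp only [dif_pos hiTc, Finset.mem_filter, Finset.mem_univ, true_and]
        simpa [f, Equiv.symm_apply_apply] using hi'
      · intro i hi j hj hij
        have hi' : c₁ i ≠ c₂ i := by simpa using hi
        have hj' : c₁ j ≠ c₂ j := by simpa using hj
        have hiTc := hdiffTc i hi'
        have hjTc := hdiffTc j hj'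
        have hij' : (e ⟨i, hiTc⟩ : Fin m) = e ⟨j, hjTc⟩ := by
          simpa only [dif_pos hiTc, dif_pos hjTc] using hij
        exact Subtype.mk_eq_mk.1 (e.injective hij')
  -- D.card ≤ Aq
  have hAqub : ∀ s ∈ {s : ℕ | ∃ C : Finset (Fin m → Fin q), C.card = s ∧
      ∀ c₁ ∈ C, ∀ c₂ ∈ C, c₁ ≠ c₂ → d ≤ hammingDist c₁ c₂}, s ≤ q ^ m := by
    rintro s ⟨C', rfl, -⟩
    calc C'.card ≤ Fintype.card (Fin m → Fin q) := Finset.card_le_univ C'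
      _ = q ^ m := by rw [Fintype.card_fun, Fintype.card_fin, Fintype.card_fin]
  have hDAq : D.card ≤ Aq q m d :=
    le_csSup ⟨q ^ m, hAqub⟩ ⟨D, rfl, hDdist⟩
  have hC₀ne : C₀.Nonempty := by
    obtain ⟨c, hc, hcρ⟩ := Finset.mem_image.1 hv₁mem
    exact ⟨c, Finset.mem_filter.2 ⟨hc, hcρ⟩⟩
  have hDpos : 1 ≤ D.card := by
    rw [hDcard]; exact Finset.card_pos.2 hC₀ne
  have hAqpos : 1 ≤ Aq q m d := le_trans hDpos hDAq
  -- final real computation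
  have hfinal : C.card ≤ q ^ (t * r) * Aq q m d := by
    calc C.card ≤ q ^ (t * r) * C₀.card := hCbound
      _ = q ^ (t * r) * D.card := by rw [hDcard]
      _ ≤ q ^ (t * r) * Aq q m d := Nat.mul_le_mul_left _ hDAq
  have hq1 : (1 : ℝ) < (q : ℝ) := by
    have : 1 < q := by omega
    exact_mod_cast this
  have hCpos : (0 : ℝ) < (C.card : ℝ) := by
    have : 0 < C.card := by omega
    exact_mod_cast this
  rw [hk]
  have hle : (C.card : ℝ) ≤ (q : ℝ) ^ (t * r) * (Aq q m d : ℝ) := by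
    exact_mod_cast hfinal
  have h1 : Real.logb q C.card ≤ Real.logb q ((q : ℝ) ^ (t * r) * (Aq q m d : ℝ)) :=
    Real.logb_le_logb_of_le hq1 hCpos hle
  have h2 : Real.logb q ((q : ℝ) ^ (t * r) * (Aq q m d : ℝ)) =
      (t * r : ℕ) + Real.logb q (Aq q m d) := by
    rw [Real.logb_mul (by positivity) (by exact_mod_cast Nat.one_le_iff_ne_zero.1 hAqpos),
      Real.logb_pow, Real.logb_self_eq_one hq1]
    push_cast
    ring
  refine h1.trans ?_
  rw [h2]
  push_cast
  linarith
end

section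
/- Let G be a finite simple bipartite graph in which every vertex has degree at most Δ_max, and let C(G) be a graph code of G over a finite field 𝔽_q (defined by nonzero coefficients a(v,e) at each vertex-incident-edge pair). Then C(G) has (3(Δ_max − 1), 3)-cooperative locality: for every set S of 3 edges there exists a set Γ of at most 3(Δ_max − 1) edges, disjoint from S, such that any two codewords of C(G) agreeing on all edges in Γ agree on all edges in S. -/
/-!
Edges of `S` can be recovered one at a time. If an edge `f ∈ S` has an endpoint `v` lying on no
other edge of `S`, the check at `v` determines `f` from the at most `Δ - 1` other edges
at `v`, none of which lies in `S`; remove `f` from `S` and repeat. In a triangle-free (in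
particular a bipartite) graph every nonempty set of at most three edges contains such an edge,
so `S` is recovered from at most `|S| (Δ - 1)` edges outside it.
-/

open Finset

namespace SimpleGraph

variable {V : Type*} [Fintype V] [DecidableEq V] (G : SimpleGraph V) [DecidableRel G.Adj]

def edgesAt (v : V) : Finset G.edgeFinset := {e | v ∈ (e : Sym2 V)}

@[simp]
theorem mem_edgesAt {v : V} {e : G.edgeFinset} : e ∈ G.edgesAt v ↔ v ∈ (e : Sym2 V) := by
  simp [edgesAt]

theorem card_edgesAt (v : V) : #(G.edgesAt v) = G.degree v := by
  rw [← card_incidenceFinset_eq_degree, incidenceFinset_eq_filter,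
    ← card_map (Function.Embedding.subtype (· ∈ G.edgeFinset))]
  congr 1
  ext e
  simp [and_comm]

def graphCode {F : Type*} [Ring F] (a : V → Sym2 V → F) : Set (G.edgeFinset → F) :=
  {x | ∀ v, ∑ e : G.edgeFinset, (if v ∈ (e : Sym2 V) then a v e * x e else 0) = 0}

variable {G} {F : Type*} [Ring F] {a : V → Sym2 V → F}

theorem sub_mem_graphCode {x y : G.edgeFinset → F} (hx : x ∈ G.graphCode a)
    (hy : y ∈ G.graphCode a) : x - y ∈ G.graphCode a := by
  intro v
  simpa [← sum_sub_distrib, ite_sub_ite, mul_sub] using congrArg₂ (· - ·) (hx v) (hy v)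

theorem eq_zero_of_mem_graphCode [NoZeroDivisors F]
    (ha : ∀ v : V, ∀ e ∈ G.incidenceSet v, a v e ≠ 0) {z : G.edgeFinset → F}
    (hz : z ∈ G.graphCode a) {v : V} {f : G.edgeFinset} (hvf : v ∈ (f : Sym2 V))
    (hzero : ∀ e ∈ G.edgesAt v, e ≠ f → z e = 0) : z f = 0 := by
  have hcheck := hz v
  rw [sum_eq_single_of_mem f (mem_univ f) fun e _ hef => by
    split_ifs with hve
    · rw [hzero e ((mem_edgesAt G).mpr hve) hef, mul_zero]
    · rfl, if_pos hvf] at hcheck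
  exact (mul_eq_zero.mp hcheck).resolve_left (ha v f ⟨mem_edgeFinset.mp f.2, hvf⟩)

variable (G) in
def HasPrivateVertex (T : Finset G.edgeFinset) : Prop :=
  ∃ f ∈ T, ∃ v ∈ (f : Sym2 V), ∀ e ∈ T, v ∈ (e : Sym2 V) → e = f

/-- If `f₁ = ab` had no private vertex, `a` and `b` would lie on further edges `f₂ = ac` and `f₃`,
and `c` on a fourth edge, which can only be `f₃` as `#T ≤ 3`; then `abc` is a triangle. -/
theorem CliqueFree.hasPrivateVertex (hG : G.CliqueFree 3) {T : Finset G.edgeFinset}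
    (hne : T.Nonempty) (hcard : #T ≤ 3) : G.HasPrivateVertex T := by
  by_contra! h
  simp only [HasPrivateVertex, not_exists, not_and, not_forall] at h
  obtain ⟨f₁, hf₁⟩ := hne
  obtain ⟨a, b, hab⟩ : ∃ a b, s(a, b) = (f₁ : Sym2 V) :=
    Sym2.exists (f := (· = (f₁ : Sym2 V))) |>.mp ⟨_, rfl⟩
  have hadj : G.Adj a b := by rw [← mem_edgeSet, ← mem_edgeFinset, hab]; exact f₁.2
  obtain ⟨f₂, hf₂, ha₂, h21⟩ := h f₁ hf₁ a (by simp [← hab])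
  obtain ⟨f₃, hf₃, hb₃, h31⟩ := h f₁ hf₁ b (by simp [← hab])
  obtain ⟨c, hc⟩ := Sym2.mem_iff_exists.mp ha₂
  have hac : G.Adj a c := by rw [← mem_edgeSet, ← mem_edgeFinset, ← hc]; exact f₂.2
  have hcb : c ≠ b := by rintro rfl; exact h21 (Subtype.ext (hc.trans hab))
  obtain ⟨f₄, hf₄, hc₄, h42⟩ := h f₂ hf₂ c (by simp [hc])
  have h41 : f₄ ≠ f₁ := by
    rintro rfl
    rw [← hab, Sym2.mem_iff] at hc₄
    exact hc₄.elim (fun h => hac.ne h.symm) hcb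
  have h32 : f₃ ≠ f₂ := by
    rintro rfl
    exact h21 (Subtype.ext ((Sym2.mem_and_mem_iff hadj.ne).mp ⟨ha₂, hb₃⟩ |>.trans hab))
  have h43 : f₄ = f₃ := by
    by_contra h43
    have := card_le_card (show {f₁, f₂, f₃, f₄} ⊆ T by simp [insert_subset_iff, *])
    rw [card_insert_of_notMem (by simp [Ne.symm h21, Ne.symm h31, Ne.symm h41]),
      card_insert_of_notMem (by simp [Ne.symm h32, Ne.symm h42]),
      card_pair (Ne.symm h43)] at this
    omega
  have hbc : G.Adj b c := by
    rw [← mem_edgeSet, ← (Sym2.mem_and_mem_iff hcb.symm).mp ⟨hb₃, h43 ▸ hc₄⟩, ← mem_edgeFinset]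
    exact f₃.2
  exact hG {a, b, c} (is3Clique_triple_iff.mpr ⟨hadj, hac, hbc⟩)

theorem exists_recoveringSet [NoZeroDivisors F]
    (ha : ∀ v : V, ∀ e ∈ G.incidenceSet v, a v e ≠ 0) {Δ : ℕ} (hdeg : ∀ v, G.degree v ≤ Δ)
    (S : Finset G.edgeFinset) (hS : ∀ T ⊆ S, T.Nonempty → G.HasPrivateVertex T) :
    ∃ Γ : Finset G.edgeFinset, Disjoint Γ S ∧ #Γ ≤ #S * (Δ - 1) ∧
      ∀ z ∈ G.graphCode a, (∀ e ∈ Γ, z e = 0) → ∀ e ∈ S, z e = 0 := by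
  induction S using Finset.strongInduction with
  | H S ih =>
  rcases S.eq_empty_or_nonempty with rfl | hne
  · exact ⟨∅, by simp⟩
  obtain ⟨f, hfS, v, hvf, hpriv⟩ := hS S subset_rfl hne
  obtain ⟨Γ', hdisj', hcard', hrec'⟩ :=
    ih (S.erase f) (erase_ssubset hfS) fun T hT => hS T (hT.trans (erase_subset f S))
  refine ⟨Γ'.erase f ∪ (G.edgesAt v).erase f, ?_, ?_, ?_⟩
  · refine disjoint_union_left.mpr ⟨disjoint_erase_comm.mpr hdisj', Finset.disjoint_left.mpr ?_⟩
    intro e he heS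
    rw [mem_erase, mem_edgesAt] at he
    exact he.1 (hpriv e heS he.2)
  · calc #(Γ'.erase f ∪ (G.edgesAt v).erase f)
        ≤ #Γ' + (Δ - 1) := by
          refine (card_union_le _ _).trans (add_le_add (card_erase_le) ?_)
          rw [card_erase_of_mem ((mem_edgesAt G).mpr hvf), card_edgesAt]
          exact Nat.sub_le_sub_right (hdeg v) 1
      _ ≤ #(S.erase f) * (Δ - 1) + (Δ - 1) := by gcongr
      _ = #S * (Δ - 1) := by rw [← card_erase_add_one hfS, add_one_mul]
  · intro z hz hzΓ
    have hzf : z f = 0 := eq_zero_of_mem_graphCode ha hz hvf fun e he hef =>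
      hzΓ e (mem_union_right _ (mem_erase.mpr ⟨hef, he⟩))
    have hzS' := hrec' z hz fun e he =>
      if hef : e = f then hef ▸ hzf else hzΓ e (mem_union_left _ (mem_erase.mpr ⟨hef, he⟩))
    intro e he
    exact if hef : e = f then hef ▸ hzf else hzS' e (mem_erase.mpr ⟨hef, he⟩)

end SimpleGraph

theorem stmt_6_general {V : Type*} [Fintype V] [DecidableEq V]
    (G : SimpleGraph V) [DecidableRel G.Adj]
    (hbip : G.Colorable 2)
    (Δmax : ℕ) (hdeg : ∀ v : V, G.degree v ≤ Δmax)
    (F : Type*) [Field F]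
    (a : V → Sym2 V → F) (ha : ∀ v : V, ∀ e ∈ G.incidenceSet v, a v e ≠ 0)
    (Code : Set (G.edgeFinset → F))
    (hCode : Code = {x | ∀ v : V,
      ∑ e : G.edgeFinset, (if v ∈ (e : Sym2 V) then a v (e : Sym2 V) * x e else 0) = 0})
    (S : Finset G.edgeFinset) (hS : S.card = 3) :
    ∃ Γ : Finset G.edgeFinset, Disjoint Γ S ∧ Γ.card ≤ 3 * (Δmax - 1) ∧
      ∀ x ∈ Code, ∀ y ∈ Code, (∀ e ∈ Γ, x e = y e) → ∀ e ∈ S, x e = y e := by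
  have hG : G.CliqueFree 3 := hbip.cliqueFree (by norm_num)
  obtain ⟨Γ, hΓS, hcard, hrec⟩ := SimpleGraph.exists_recoveringSet ha hdeg S fun T hT hne =>
    hG.hasPrivateVertex hne (hS ▸ card_le_card hT)
  refine ⟨Γ, hΓS, hS ▸ hcard, fun x hx y hy hxy e he => sub_eq_zero.mp ?_⟩
  subst hCode
  exact hrec (x - y) (SimpleGraph.sub_mem_graphCode hx hy)
    (fun e he => sub_eq_zero.mpr (hxy e he)) e he

/-- a graph code of a finite simple bipartite graph with maximum degree at
most `Δmax` (defined by nonzero coefficients `a v e` at each vertex-incident-edge pair)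
has `(3(Δmax − 1), 3)`-cooperative locality. -/
theorem stmt_6 {V : Type*} [Fintype V] [DecidableEq V]
    (G : SimpleGraph V) [DecidableRel G.Adj]
    (hbip : G.Colorable 2)
    (Δmax : ℕ) (hdeg : ∀ v : V, G.degree v ≤ Δmax)
    (F : Type*) [Field F] [Fintype F]
    (a : V → Sym2 V → F) (ha : ∀ v : V, ∀ e ∈ G.incidenceSet v, a v e ≠ 0)
    (Code : Set (G.edgeFinset → F))
    (hCode : Code = {x | ∀ v : V,
      ∑ e : G.edgeFinset, (if v ∈ (e : Sym2 V) then a v (e : Sym2 V) * x e else 0) = 0})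
    (S : Finset G.edgeFinset) (hS : S.card = 3) :
    ∃ Γ : Finset G.edgeFinset, Disjoint Γ S ∧ Γ.card ≤ 3 * (Δmax - 1) ∧
      ∀ x ∈ Code, ∀ y ∈ Code, (∀ e ∈ Γ, x e = y e) → ∀ e ∈ S, x e = y e :=
  stmt_6_general G hbip Δmax hdeg F a ha Code hCode S hS
end

section
/- Let G be a finite simple bipartite Δ-regular graph whose girth (length of its shortest cycle) is g, with g ≥ 4 finite, and let C(G) be a graph code of G over a finite field 𝔽_q (defined by nonzero coefficients a(v,e) at each vertex-incident-edge pair). Then the minimum distance of C(G) is at least g; equivalently, every nonzero codeword x ∈ C(G) is nonzero on at least g edges. -/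
/-!
On the edges where a codeword `x` is nonzero, the check equation at a vertex `v` is a linear
relation with nonzero coefficients, so `v` cannot meet exactly one such edge. The support of `x`,
viewed as a subgraph of `G`, is therefore a nonempty graph without leaves; it contains a cycle,
which has at least `girth G` edges, all of them in the support.
-/

open Finset

lemma Finset.exists_ne_of_sum_mul_eq_zero {ι R : Type*} [Semiring R] [NoZeroDivisors R]
    {s : Finset ι} {c y : ι → R} (hc : ∀ i ∈ s, c i ≠ 0) (hsum : ∑ i ∈ s, c i * y i = 0)
    {i : ι} (hi : i ∈ s) (hy : y i ≠ 0) : ∃ j ∈ s, j ≠ i ∧ y j ≠ 0 := by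
  by_contra! h
  rw [sum_eq_single_of_mem i hi fun j hj hji => by rw [h j hj hji, mul_zero]] at hsum
  exact mul_ne_zero (hc i hi) hy hsum

namespace SimpleGraph

variable {V : Type*}

theorem Walk.IsTrail.length_le_card_of_edges_subset {G : SimpleGraph V} {u v : V}
    {p : G.Walk u v} (hp : p.IsTrail) {s : Finset (Sym2 V)} (hs : ∀ e ∈ p.edges, e ∈ s) :
    p.length ≤ #s := by
  classical
  rw [← p.length_edges, ← List.toFinset_card_of_nodup hp.edges_nodup]
  exact card_le_card fun e he => hs e (List.mem_toFinset.mp he)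

-- The first vertex of a longest path is a leaf.
theorem IsAcyclic.exists_existsUnique_adj {H : SimpleGraph V} [Finite H.edgeSet]
    (hH : H.IsAcyclic) {u v : V} (huv : H.Adj u v) : ∃ w, ∃! w', H.Adj w w' := by
  have : Nonempty V := ⟨u⟩
  obtain ⟨a, b, p, hp, hmax⟩ := Walk.exists_isPath_forall_isPath_length_le_length H
  have hnil : ¬p.Nil := by
    have := hmax u v (.cons huv .nil) (by simpa using huv.ne)
    rw [← Walk.length_eq_zero_iff]
    simp at this
    omega
  refine ⟨a, p.snd, p.adj_snd hnil, fun w haw => hH.eq_snd_of_adj_start hp haw ?_⟩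
  by_contra hw
  have := hmax w b (.cons haw.symm p) (hp.cons hw)
  simp at this

variable [Fintype V] {G : SimpleGraph V} [DecidableRel G.Adj] {F : Type*}

section Support

variable [Zero F] [DecidableEq F]

def edgeSupport (x : G.edgeFinset → F) : Finset (Sym2 V) :=
  ({e | x e ≠ 0} : Finset G.edgeFinset).map (Function.Embedding.subtype _)

theorem coe_mem_edgeSupport {x : G.edgeFinset → F} {e : G.edgeFinset} :
    (e : Sym2 V) ∈ edgeSupport x ↔ x e ≠ 0 := by
  simp [edgeSupport]

theorem card_edgeSupport (x : G.edgeFinset → F) : #(edgeSupport x) = hammingNorm x :=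
  card_map _

theorem edgeSupport_subset_edgeSet (x : G.edgeFinset → F) : ↑(edgeSupport x) ⊆ G.edgeSet := by
  intro e he
  obtain ⟨e, -, rfl⟩ := mem_map.mp he
  exact mem_edgeFinset.mp e.2

theorem fromEdgeSet_edgeSupport_le (x : G.edgeFinset → F) : fromEdgeSet ↑(edgeSupport x) ≤ G :=
  (G.fromEdgeSet_le).mpr (Set.sdiff_subset.trans (edgeSupport_subset_edgeSet x))

end Support

variable [Semiring F] [DecidableEq V]

def IsCodeword (a : V → Sym2 V → F) (x : G.edgeFinset → F) : Prop :=
  ∀ v, ∑ e : G.edgeFinset, (if v ∈ (e : Sym2 V) then a v e * x e else 0) = 0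

variable [NoZeroDivisors F] [DecidableEq F] {a : V → Sym2 V → F} {x : G.edgeFinset → F}

theorem IsCodeword.exists_adj_ne (hx : IsCodeword a x)
    (ha : ∀ v, ∀ e ∈ G.incidenceSet v, a v e ≠ 0) {v w : V}
    (hvw : (fromEdgeSet ↑(edgeSupport x)).Adj v w) :
    ∃ w', (fromEdgeSet ↑(edgeSupport x)).Adj v w' ∧ w' ≠ w := by
  obtain ⟨hvw, -⟩ := (fromEdgeSet_adj _).mp hvw
  obtain ⟨e₀, he₀, hve₀ : (e₀ : Sym2 V) = s(v, w)⟩ := mem_map.mp hvw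
  have hcheck := hx v
  rw [← sum_filter] at hcheck
  obtain ⟨e₁, he₁, he₁₀, hxe₁⟩ := exists_ne_of_sum_mul_eq_zero (c := fun e : G.edgeFinset => a v e)
    (fun (e : G.edgeFinset) he => ha v e ⟨mem_edgeFinset.mp e.2, (mem_filter.mp he).2⟩) hcheck
    (mem_filter.mpr ⟨mem_univ _, hve₀ ▸ Sym2.mem_mk_left v w⟩) (mem_filter.mp he₀).2
  obtain ⟨w', hvw'⟩ := Sym2.mem_iff_exists.mp (mem_filter.mp he₁).2
  refine ⟨w', (fromEdgeSet_adj _).mpr ⟨hvw' ▸ coe_mem_edgeSupport.mpr hxe₁, ?_⟩, ?_⟩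
  · exact G.ne_of_adj (by rw [← mem_edgeSet, ← hvw']; exact mem_edgeFinset.mp e₁.2)
  · rintro rfl
    exact he₁₀ (Subtype.ext (hvw'.trans hve₀.symm))

theorem IsCodeword.girth_le_hammingNorm (hx : IsCodeword a x)
    (ha : ∀ v, ∀ e ∈ G.incidenceSet v, a v e ≠ 0) (hx0 : x ≠ 0) : G.girth ≤ hammingNorm x := by
  set H := fromEdgeSet (edgeSupport x : Set (Sym2 V))
  obtain ⟨e, hxe⟩ := Function.ne_iff.mp hx0
  obtain ⟨u, v, huv⟩ : ∃ u v, (e : Sym2 V) = s(u, v) := Sym2.exists.mp ⟨_, rfl⟩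
  have hHuv : H.Adj u v := by
    refine (fromEdgeSet_adj _).mpr ⟨huv ▸ coe_mem_edgeSupport.mpr hxe, G.ne_of_adj ?_⟩
    rw [← mem_edgeSet, ← huv]
    exact mem_edgeFinset.mp e.2
  have hH : ¬H.IsAcyclic := fun hH => by
    obtain ⟨w, w', hww', hunique⟩ := hH.exists_existsUnique_adj hHuv
    obtain ⟨w'', hww'', hne⟩ := hx.exists_adj_ne ha hww'
    exact hne (hunique w'' hww'')
  obtain ⟨w, c, hc⟩ : ∃ w, ∃ c : H.Walk w w, c.IsCycle := by simpa [IsAcyclic] using hH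
  calc G.girth ≤ (c.mapLe (fromEdgeSet_edgeSupport_le x)).length := girth_le_length (hc.mapLe _)
    _ = c.length := Walk.length_mapLe _ _
    _ ≤ #(edgeSupport x) := hc.isTrail.length_le_card_of_edges_subset fun e he =>
      (edgeSet_fromEdgeSet _ ▸ c.edges_subset_edgeSet he).1
    _ = hammingNorm x := card_edgeSupport x

end SimpleGraph

theorem stmt_8_general {V : Type*} [Fintype V] [DecidableEq V]
    (G : SimpleGraph V) [DecidableRel G.Adj]
    (g : ℕ) (hgirth : G.girth = g)
    (F : Type*) [Field F] [DecidableEq F]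
    (a : V → Sym2 V → F) (ha : ∀ v : V, ∀ e ∈ G.incidenceSet v, a v e ≠ 0)
    (Code : Set (G.edgeFinset → F))
    (hCode : Code = {x | ∀ v : V,
      ∑ e : G.edgeFinset, (if v ∈ (e : Sym2 V) then a v (e : Sym2 V) * x e else 0) = 0}) :
    ∀ x ∈ Code, x ≠ 0 → g ≤ hammingNorm x := by
  subst hCode hgirth
  exact fun x hx hx0 => SimpleGraph.IsCodeword.girth_le_hammingNorm hx ha hx0

/-- a graph code of a finite simple bipartite `Δ`-regular graph with finite
girth `g ≥ 4` has minimum distance at least `g`: every nonzero codeword is nonzero on at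
least `g` edges. -/
theorem stmt_8 {V : Type*} [Fintype V] [DecidableEq V]
    (G : SimpleGraph V) [DecidableRel G.Adj]
    (hbip : G.Colorable 2)
    (Δ : ℕ) (hreg : G.IsRegularOfDegree Δ)
    (g : ℕ) (hg : 4 ≤ g) (hgirth : G.girth = g)
    (F : Type*) [Field F] [Fintype F] [DecidableEq F]
    (a : V → Sym2 V → F) (ha : ∀ v : V, ∀ e ∈ G.incidenceSet v, a v e ≠ 0)
    (Code : Set (G.edgeFinset → F))
    (hCode : Code = {x | ∀ v : V,
      ∑ e : G.edgeFinset, (if v ∈ (e : Sym2 V) then a v (e : Sym2 V) * x e else 0) = 0}) :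
    ∀ x ∈ Code, x ≠ 0 → g ≤ hammingNorm x :=
  stmt_8_general G g hgirth F a ha Code hCode
end

section
/- Let G be a finite bipartite graph on vertex parts U and V in which every vertex of U has degree exactly h, let t ≥ 1 be an integer and ε ≥ 0 a real number, and let A ⊆ U be a set with |Γ(A)| ≥ (1−ε)·h·|A|. Define U_t(A) = {v ∈ Γ(A) : v is adjacent to at most t vertices of A}. Then |U_t(A)| ≥ (1 − ε − ε/t)·h·|A|. -/
open Finset

/-- in a bipartite graph where every left vertex has degree exactly `h`,
if `A ⊆ U` satisfies `|Γ(A)| ≥ (1−ε)h|A|`, then the set `U_t(A)` of neighbors of `A`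
adjacent to at most `t` vertices of `A` satisfies `|U_t(A)| ≥ (1 − ε − ε/t)h|A|`. -/
theorem stmt_12 {U V : Type*} [Fintype U] [Fintype V] [DecidableEq U] [DecidableEq V]
    (Adj : U → V → Prop) [∀ u v, Decidable (Adj u v)]
    (h : ℕ) (hdeg : ∀ u : U, (univ.filter fun v => Adj u v).card = h)
    (t : ℕ) (ht : 1 ≤ t) (ε : ℝ) (hε0 : 0 ≤ ε)
    (A : Finset U)
    (hA : (1 - ε) * h * A.card ≤ ((univ.filter fun v : V => ∃ u ∈ A, Adj u v).card : ℝ)) :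
    (1 - ε - ε / t) * h * A.card ≤
      (((univ.filter fun v : V => ∃ u ∈ A, Adj u v).filter
        fun v => (A.filter fun u => Adj u v).card ≤ t).card : ℝ) := by
  set Γ : Finset V := univ.filter fun v : V => ∃ u ∈ A, Adj u v with hΓ
  set S : Finset V := Γ.filter fun v => (A.filter fun u => Adj u v).card ≤ t with hS
  -- total edge count equals h * |A|
  have hedges : ∑ v ∈ Γ, (A.filter fun u => Adj u v).card = h * A.card := by
    have h1 : ∑ v ∈ Γ, (A.filter fun u => Adj u v).card
        = ∑ v : V, (A.filter fun u => Adj u v).card := by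
      rw [← Finset.sum_filter_add_sum_filter_not univ
        (fun v : V => ∃ u ∈ A, Adj u v) (fun v => (A.filter fun u => Adj u v).card)]
      have h0 : ∑ v ∈ univ.filter (fun v : V => ¬ ∃ u ∈ A, Adj u v),
          (A.filter fun u => Adj u v).card = 0 := by
        apply Finset.sum_eq_zero
        intro v hv
        simp only [mem_filter, mem_univ, true_and] at hv
        rw [Finset.card_eq_zero]
        ext u
        simp only [mem_filter, Finset.notMem_empty, iff_false, not_and]
        intro hu hadj
        exact hv ⟨u, hu, hadj⟩
      rw [h0, add_zero]
    rw [h1]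
    calc ∑ v : V, (A.filter fun u => Adj u v).card
        = ∑ v : V, ∑ u ∈ A, (if Adj u v then 1 else 0) := by
          refine Finset.sum_congr rfl fun v _ => ?_
          rw [Finset.card_filter]
      _ = ∑ u ∈ A, ∑ v : V, (if Adj u v then 1 else 0) := Finset.sum_comm
      _ = ∑ u ∈ A, h := by
          refine Finset.sum_congr rfl fun u _ => ?_
          rw [← Finset.card_filter, hdeg u]
      _ = h * A.card := by rw [Finset.sum_const, smul_eq_mul, mul_comm]
  -- key counting inequality: (t+1) * |Γ| ≤ h * |A| + t * |S|
  have hkey : (t + 1) * Γ.card ≤ h * A.card + t * S.card := by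
    have hsplit : ∑ v ∈ Γ, (A.filter fun u => Adj u v).card
        = ∑ v ∈ S, (A.filter fun u => Adj u v).card
          + ∑ v ∈ Γ.filter (fun v => ¬ (A.filter fun u => Adj u v).card ≤ t),
            (A.filter fun u => Adj u v).card :=
      (Finset.sum_filter_add_sum_filter_not Γ _ _).symm
    set B : Finset V := Γ.filter (fun v => ¬ (A.filter fun u => Adj u v).card ≤ t) with hB
    have hS1 : S.card ≤ ∑ v ∈ S, (A.filter fun u => Adj u v).card := by
      have := Finset.card_nsmul_le_sum S (fun v => (A.filter fun u => Adj u v).card) 1 ?_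
      · simpa using this
      · intro v hv
        simp only [hS, hΓ, mem_filter, mem_univ, true_and] at hv
        obtain ⟨⟨u, hu, hadj⟩, _⟩ := hv
        have hmem : u ∈ A.filter fun u => Adj u v := by simp [hu, hadj]
        have := Finset.card_pos.mpr ⟨u, hmem⟩
        show 1 ≤ (A.filter fun u => Adj u v).card
        omega
    have hB1 : (t + 1) * B.card ≤ ∑ v ∈ B, (A.filter fun u => Adj u v).card := by
      have := Finset.card_nsmul_le_sum B (fun v => (A.filter fun u => Adj u v).card) (t + 1) ?_
      · simpa [smul_eq_mul, mul_comm] using this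
      · intro v hv
        simp only [hB, mem_filter] at hv
        show t + 1 ≤ (A.filter fun u => Adj u v).card
        omega
    have hcards : S.card + B.card = Γ.card :=
      Finset.card_filter_add_card_filter_not _
    calc (t + 1) * Γ.card = (t + 1) * S.card + (t + 1) * B.card := by
          rw [← hcards, mul_add]
      _ = (t * S.card + (t + 1) * B.card) + S.card := by ring
      _ ≤ (t * S.card + ∑ v ∈ B, (A.filter fun u => Adj u v).card)
            + ∑ v ∈ S, (A.filter fun u => Adj u v).card := by
          gcongr
      _ = h * A.card + t * S.card := by omega
  -- pass to the reals
  have ht0 : (0 : ℝ) < t := by exact_mod_cast ht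
  have hkeyR : ((t : ℝ) + 1) * Γ.card ≤ h * A.card + t * S.card := by
    exact_mod_cast hkey
  have hε' : ε / t * t = ε := div_mul_cancel₀ ε (ne_of_gt ht0)
  have hmul : ((t : ℝ) + 1) * ((1 - ε) * h * A.card) ≤ ((t : ℝ) + 1) * Γ.card :=
    mul_le_mul_of_nonneg_left hA (by positivity)
  have hgoal : ((1 - ε - ε / t) * h * A.card) * t ≤ (S.card : ℝ) * t := by
    have hid : ((1 - ε - ε / t) * h * A.card) * t
        = (1 - ε) * h * A.card * t - ε * h * A.card := by
      field_simp
    rw [hid]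
    nlinarith [hmul, hkeyR]
  exact le_of_mul_le_mul_right hgoal ht0
end

section
/- Let G̃ be a finite Δ-regular bipartite graph on vertex parts V₀ and V₁ with |V₀| = |V₁| = N, and suppose G̃ satisfies the mixing property: for every S ⊆ V₀ and T ⊆ V₁, |e(S,T) − Δ|S||T|/N| ≤ λ·√(|S||T|), where e(S,T) is the number of edges between S and T and λ > 0 is a real number. Let δ > 0, ε > 0 and ℓ ≥ 0 be real numbers with δΔ ≥ (1+ε)·λ and ℓ ≤ N·λ·ε·δ/2. If S¹ ⊆ V₀ and S² ⊆ V₁ are sets such that |S¹| ≤ ℓ/(δΔ) and every vertex of S² is adjacent to at least δΔ vertices of S¹, then |S²| ≤ |S¹|/(1+ε). -/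
open Finset

set_option maxHeartbeats 1000000 in
/-- in a `Δ`-regular bipartite graph on parts of size `N` satisfying the
expander mixing property with parameter `λ`, if `δΔ ≥ (1+ε)λ`, `ℓ ≤ Nλεδ/2`,
`|S¹| ≤ ℓ/(δΔ)` and every vertex of `S²` has at least `δΔ` neighbors in `S¹`, then
`|S²| ≤ |S¹|/(1+ε)`. -/
theorem stmt_13 {V₀ V₁ : Type*} [Fintype V₀] [Fintype V₁]
    (Adj : V₀ → V₁ → Prop) [∀ u v, Decidable (Adj u v)]
    (N : ℕ) (hN₀ : Fintype.card V₀ = N) (hN₁ : Fintype.card V₁ = N)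
    (Δ : ℕ) (hreg₀ : ∀ u : V₀, (univ.filter fun v => Adj u v).card = Δ)
    (hreg₁ : ∀ v : V₁, (univ.filter fun u => Adj u v).card = Δ)
    (lam : ℝ) (hlam : 0 < lam)
    (hmix : ∀ S : Finset V₀, ∀ T : Finset V₁,
      |((((S ×ˢ T).filter fun p => Adj p.1 p.2).card : ℝ) - Δ * S.card * T.card / N)| ≤
        lam * Real.sqrt (S.card * T.card))
    (δ ε ℓ : ℝ) (hδ : 0 < δ) (hε : 0 < ε) (hℓ : 0 ≤ ℓ)
    (h₁ : (1 + ε) * lam ≤ δ * Δ) (h₂ : ℓ ≤ N * lam * ε * δ / 2)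
    (S₁ : Finset V₀) (S₂ : Finset V₁)
    (hS₁ : (S₁.card : ℝ) ≤ ℓ / (δ * Δ))
    (hS₂ : ∀ v ∈ S₂, δ * Δ ≤ ((S₁.filter fun u => Adj u v).card : ℝ)) :
    (S₂.card : ℝ) ≤ S₁.card / (1 + ε) := by
  set s : ℝ := (S₁.card : ℝ) with hs
  set t : ℝ := (S₂.card : ℝ) with ht
  have hs0 : 0 ≤ s := Nat.cast_nonneg _
  have ht0 : 0 ≤ t := Nat.cast_nonneg _
  have hε1 : (0:ℝ) < 1 + ε := by linarith
  -- handle N = 0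
  rcases Nat.eq_zero_or_pos N with hN | hNpos
  · have : S₂.card = 0 := by
      have := Finset.card_le_card (Finset.subset_univ S₂)
      simp only [Finset.card_univ, hN₁, hN] at this
      omega
    simp only [ht, this, Nat.cast_zero]
    positivity
  have hNR : (0:ℝ) < N := by exact_mod_cast hNpos
  have hδΔ : (0:ℝ) < δ * Δ := lt_of_lt_of_le (by positivity) h₁
  -- rcases t = 0
  rcases eq_or_lt_of_le ht0 with ht0' | htpos
  · rw [← ht0']; positivity
  -- edge count
  have hEnat : ((S₁ ×ˢ S₂).filter fun p => Adj p.1 p.2).card =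
      ∑ v ∈ S₂, (S₁.filter fun u => Adj u v).card := by
    rw [Finset.card_filter, Finset.sum_product_right]
    exact Finset.sum_congr rfl fun v _ => (Finset.card_filter _ _).symm
  have hE : (((S₁ ×ˢ S₂).filter fun p => Adj p.1 p.2).card : ℝ) =
      ∑ v ∈ S₂, ((S₁.filter fun u => Adj u v).card : ℝ) := by
    rw [hEnat]; push_cast; rfl
  have hlow : δ * Δ * t ≤ (((S₁ ×ˢ S₂).filter fun p => Adj p.1 p.2).card : ℝ) := by
    rw [hE]
    calc δ * Δ * t = ∑ _v ∈ S₂, δ * Δ := by rw [Finset.sum_const, nsmul_eq_mul, ht]; ring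
    _ ≤ _ := Finset.sum_le_sum hS₂
  have hup : (((S₁ ×ˢ S₂).filter fun p => Adj p.1 p.2).card : ℝ) ≤
      Δ * s * t / N + lam * Real.sqrt (s * t) := by
    have := hmix S₁ S₂
    rw [abs_le] at this
    linarith [this.1, this.2]
  have key : δ * Δ * t ≤ Δ * s * t / N + lam * Real.sqrt (s * t) := le_trans hlow hup
  -- bound Δ * s / N ≤ lam * ε / 2
  have hΔR : (0:ℝ) < Δ := by
    rcases (Nat.eq_zero_or_pos Δ) with h | h
    · exfalso; rw [h] at hδΔ; simp at hδΔ
    · exact_mod_cast h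
  have hsΔ : s * Δ ≤ N * lam * ε / 2 := by
    have h3 : s * (δ * Δ) ≤ ℓ := (le_div_iff₀ hδΔ).mp hS₁
    nlinarith
  have hsmall : Δ * s * t / N ≤ lam * ε / 2 * t := by
    rw [div_le_iff₀ hNR]
    nlinarith
  have hsqrt : (1 + ε / 2) * t ≤ Real.sqrt (s * t) := by
    have h4 : (1 + ε) * lam * t ≤ δ * Δ * t :=
      mul_le_mul_of_nonneg_right h₁ ht0
    have h5 : lam * ((1 + ε / 2) * t) ≤ lam * Real.sqrt (s * t) := by nlinarith
    exact le_of_mul_le_mul_left h5 hlam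
  have hsq : ((1 + ε / 2) * t) ^ 2 ≤ s * t := by
    have h6 := mul_le_mul hsqrt hsqrt (by positivity) (Real.sqrt_nonneg (s * t))
    rw [Real.mul_self_sqrt (by positivity)] at h6
    nlinarith [h6]
  rw [le_div_iff₀ hε1]
  nlinarith [sq_nonneg (ε * t)]
end

section
/- Let k ≥ 2 and let C be the binary punctured Hadamard (Simplex) code of dimension k: the code whose coordinates are indexed by the nonzero vectors b ∈ (𝔽₂)^k and whose codewords are the maps b ↦ ⟨m, b⟩ = Σ_{j=1}^{k} m_j b_j (mod 2) as m ranges over (𝔽₂)^k; its length is n = 2^k − 1. Then for every integer ℓ with 1 ≤ ℓ ≤ (n−1)/2 and every set S of ℓ coordinates, there exists a set Γ of at most ℓ + 1 coordinates, disjoint from S, such that any two codewords of C agreeing on all coordinates in Γ agree on all coordinates in S. In particular, C has (ℓ+1, ℓ)-cooperative locality for every ℓ ≤ (n−1)/2. -/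
/-!
A codeword is the linear functional `b ↦ ⟨m, b⟩`, so two codewords agreeing on `Γ` agree on
`span Γ`; it suffices to find `Γ`, avoiding `S ∪ {0}`, with `|Γ| ≤ |S| + 1` and `S ⊆ span Γ`.
If `S` does not span, pick `v ∉ span S` and take `Γ = {v} ∪ (v + S)`. If `S` spans, then
`k ≤ |S|`, and since `|S| < 2^(k-1)` the complement of `S` is too large to lie in a hyperplane;
a basis chosen inside it works.
-/

open Finset Module Submodule

section Ring

variable (R : Type*) {V : Type*} [Ring R] [AddCommGroup V] [Module R V]

/-- Helper coordinates `Γ` for the coordinates `s` of a code whose coordinates are nonzero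
vectors and whose codewords are linear functionals: codewords agreeing on `Γ` agree on `s`. -/
def IsRecoverySet (s Γ : Finset V) : Prop :=
  0 ∉ Γ ∧ Disjoint Γ s ∧ ∀ x ∈ s, x ∈ span R (Γ : Set V)

variable {R}

theorem exists_isRecoverySet_card_le_succ_of_notMem_span [DecidableEq V] {s : Finset V} {v : V}
    (hv : v ∉ span R (s : Set V)) : ∃ Γ : Finset V, IsRecoverySet R s Γ ∧ #Γ ≤ #s + 1 := by
  have hΓ : ∀ x ∈ insert v (s.image (v + ·)), x ∉ span R (s : Set V) := by
    simp only [mem_insert, mem_image]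
    rintro x (rfl | ⟨y, hy, rfl⟩) hx
    · exact hv hx
    · exact hv (by simpa using sub_mem hx (subset_span hy))
  refine ⟨insert v (s.image (v + ·)), ⟨fun h0 => hΓ 0 h0 (zero_mem _),
    disjoint_left.mpr fun x hxΓ hxs => hΓ x hxΓ (subset_span hxs), fun x hx => ?_⟩, ?_⟩
  · have hvx : v + x ∈ span R (insert v (s.image (v + ·)) : Set V) :=
      subset_span (by simp [hx])
    have hv' : v ∈ span R (insert v (s.image (v + ·)) : Set V) := subset_span (by simp)
    simpa using sub_mem hvx hv'
  · exact (card_insert_le _ _).trans (Nat.add_le_add_right card_image_le 1)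

end Ring

section DivisionRing

variable {K V : Type*} [DivisionRing K] [AddCommGroup V] [Module K V]

theorem span_eq_top_of_pow_finrank_sub_one_lt_card [Finite K] [Finite V] (t : Finset V)
    (ht : Nat.card K ^ (finrank K V - 1) < #t) : span K (t : Set V) = ⊤ := by
  by_contra h
  have hlt := finrank_lt h
  have hcard : #t ≤ Nat.card K ^ finrank K (span K (t : Set V)) := by
    rw [← natCard_eq_pow_finrank, ← Set.ncard_coe_finset, ← Nat.card_coe_set_eq]
    exact Nat.card_mono (Set.toFinite _) subset_span
  have := Nat.pow_le_pow_right (Nat.card_pos (α := K)) (Nat.le_sub_one_of_lt hlt)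
  omega

theorem exists_finset_linearIndependent_span_eq (t : Finset V) :
    ∃ b ⊆ t, span K (b : Set V) = span K t ∧ LinearIndependent K (fun x : b => (x : V)) := by
  obtain ⟨b, hbt, hspan, hli⟩ := exists_linearIndependent K (t : Set V)
  lift b to Finset V using t.finite_toSet.subset hbt
  exact ⟨b, by exact_mod_cast hbt, hspan, hli⟩

theorem exists_isRecoverySet_card_le_of_span_eq_top [Fintype K] [Fintype V] [DecidableEq V]
    {s : Finset V} (hspan : span K (s : Set V) = ⊤)
    (hs : #s + Fintype.card K ^ (finrank K V - 1) < Fintype.card V) :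
    ∃ Γ : Finset V, IsRecoverySet K s Γ ∧ #Γ ≤ #s := by
  have hcompl : span K ((univ \ s : Finset V) : Set V) = ⊤ := by
    apply span_eq_top_of_pow_finrank_sub_one_lt_card
    rw [Nat.card_eq_fintype_card, card_sdiff_of_subset (subset_univ s), card_univ]
    omega
  obtain ⟨Γ, hΓ, hΓspan, hli⟩ := exists_finset_linearIndependent_span_eq (K := K) (univ \ s)
  refine ⟨Γ, ⟨fun h0 => hli.ne_zero ⟨0, h0⟩ rfl, sdiff_disjoint.mono_left hΓ,
    fun x _ => hΓspan.trans hcompl ▸ mem_top⟩, ?_⟩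
  calc #Γ ≤ finrank K V := hli.finset_card_le_finrank
    _ ≤ #s := by
      have := finrank_span_finset_le_card (R := K) s
      rwa [Set.finrank, hspan, finrank_top] at this

theorem exists_isRecoverySet_card_le_succ [Fintype K] [Fintype V] [DecidableEq V] (s : Finset V)
    (hs : #s + Fintype.card K ^ (finrank K V - 1) < Fintype.card V) :
    ∃ Γ : Finset V, IsRecoverySet K s Γ ∧ #Γ ≤ #s + 1 := by
  by_cases hspan : span K (s : Set V) = ⊤
  · obtain ⟨Γ, hΓ, hcard⟩ := exists_isRecoverySet_card_le_of_span_eq_top hspan hs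
    exact ⟨Γ, hΓ, hcard.trans (Nat.le_succ _)⟩
  · obtain ⟨v, -, hv⟩ := SetLike.exists_of_lt (lt_top_iff_ne_top.mpr hspan)
    exact exists_isRecoverySet_card_le_succ_of_notMem_span hv

end DivisionRing

theorem dotProduct_eq_of_mem_span {ι A : Type*} [CommRing A] [Fintype ι] {m₁ m₂ : ι → A}
    {s : Set (ι → A)} (h : ∀ b ∈ s, m₁ ⬝ᵥ b = m₂ ⬝ᵥ b) {b : ι → A} (hb : b ∈ span A s) :
    m₁ ⬝ᵥ b = m₂ ⬝ᵥ b :=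
  LinearMap.eqOn_span (f := dotProductBilin A A m₁) (g := dotProductBilin A A m₂) h hb

theorem stmt_15_general (k : ℕ) (hk : 2 ≤ k) (n : ℕ) (hn : n = 2 ^ k - 1)
    (ℓ : ℕ) (hℓ2 : ℓ ≤ (n - 1) / 2)
    (S : Finset {b : Fin k → ZMod 2 // b ≠ 0}) (hS : S.card = ℓ) :
    ∃ Γ : Finset {b : Fin k → ZMod 2 // b ≠ 0}, Disjoint Γ S ∧ Γ.card ≤ ℓ + 1 ∧
      ∀ m₁ m₂ : Fin k → ZMod 2,
        (∀ b ∈ Γ, ∑ j, m₁ j * b.val j = ∑ j, m₂ j * b.val j) →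
        ∀ b ∈ S, ∑ j, m₁ j * b.val j = ∑ j, m₂ j * b.val j := by
  classical
  set s := S.map (Function.Embedding.subtype _)
  have hℓ : ℓ + 2 ^ (k - 1) < 2 ^ k := by
    have hpow : 2 ^ k = 2 * 2 ^ (k - 1) := by rw [← pow_succ']; congr 1; omega
    have : 0 < 2 ^ (k - 1) := by positivity
    omega
  have hs : #s + Fintype.card (ZMod 2) ^ (finrank (ZMod 2) (Fin k → ZMod 2) - 1) <
      Fintype.card (Fin k → ZMod 2) := by
    simpa [s, hS, finrank_fin_fun] using hℓ
  obtain ⟨Γ, ⟨hΓ0, hdisj, hspan⟩, hΓcard⟩ := exists_isRecoverySet_card_le_succ (K := ZMod 2) s hs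
  refine ⟨Γ.subtype (· ≠ 0), ?_, ?_, fun m₁ m₂ hagree b hb => ?_⟩
  · exact disjoint_left.mpr fun x hxΓ hxS => disjoint_left.mp hdisj (mem_subtype.mp hxΓ)
      (mem_map_of_mem _ hxS)
  · rw [card_subtype, ← hS]
    exact (card_filter_le _ _).trans (by simpa [s] using hΓcard)
  · exact dotProduct_eq_of_mem_span
      (fun x hx => hagree ⟨x, ne_of_mem_of_not_mem hx hΓ0⟩ (mem_subtype.mpr hx))
      (hspan _ (mem_map_of_mem _ hb))

/-- the binary punctured Hadamard (Simplex) code of dimension `k ≥ 2`,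
with coordinates indexed by the nonzero vectors `b ∈ (𝔽₂)^k`, codewords
`b ↦ ⟨m, b⟩ = ∑ⱼ mⱼ bⱼ`, and length `n = 2^k − 1`, has `(ℓ+1, ℓ)`-cooperative locality
for every `1 ≤ ℓ ≤ (n−1)/2`: for every set `S` of `ℓ` coordinates there is a set `Γ` of
at most `ℓ + 1` coordinates, disjoint from `S`, such that any two codewords agreeing on
`Γ` agree on `S`. -/
theorem stmt_15 (k : ℕ) (hk : 2 ≤ k) (n : ℕ) (hn : n = 2 ^ k - 1)
    (ℓ : ℕ) (hℓ1 : 1 ≤ ℓ) (hℓ2 : ℓ ≤ (n - 1) / 2)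
    (S : Finset {b : Fin k → ZMod 2 // b ≠ 0}) (hS : S.card = ℓ) :
    ∃ Γ : Finset {b : Fin k → ZMod 2 // b ≠ 0}, Disjoint Γ S ∧ Γ.card ≤ ℓ + 1 ∧
      ∀ m₁ m₂ : Fin k → ZMod 2,
        (∀ b ∈ Γ, ∑ j, m₁ j * b.val j = ∑ j, m₂ j * b.val j) →
        ∀ b ∈ S, ∑ j, m₁ j * b.val j = ∑ j, m₂ j * b.val j :=
  stmt_15_general k hk n hn ℓ hℓ2 S hS
end

section
/- Let m and ℓ be positive integers, let 𝔽_q be a finite field, and let C be the ℓ-dimensional product parity code: the set of arrays x : ({0,1,…,m})^ℓ → 𝔽_q such that for every dimension d ∈ {1,…,ℓ} and every fixed choice of the indices in the other ℓ−1 dimensions, the sum over i ∈ {0,1,…,m} of the entries along the d-th dimension equals 0. Then C has (m·ℓ, ℓ)-cooperative locality: for every set S of ℓ coordinates of C there exists a set Γ of at most m·ℓ coordinates, disjoint from S, such that any two codewords of C agreeing on all coordinates in Γ agree on all coordinates in S. -/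
section Aux

variable {m ℓ : ℕ}

/-- Lemma A: in a set `S` of at most `ℓ` points, for every `s ∈ S` there is a direction `d`
such that the axis-parallel line through `s` in direction `d` meets `S` only in `s`. -/
lemma lineA (S : Finset (Fin ℓ → Fin (m + 1))) (hS : S.card ≤ ℓ)
    (s : Fin ℓ → Fin (m + 1)) (hs : s ∈ S) :
    ∃ d : Fin ℓ, ∀ t ∈ S, (∀ d' : Fin ℓ, d' ≠ d → t d' = s d') → t = s := by
  by_contra h
  push_neg at h
  choose t ht hts htne using h
  have hinj : Function.Injective t := by
    intro d d' hdd'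
    by_contra hne
    apply htne d
    funext e
    by_cases he : e = d
    · have h1 := hts d' e (by rw [he]; exact hne)
      rw [hdd', h1]
    · exact hts d e he
  have hmaps : ∀ d, t d ∈ S.erase s := fun d =>
    Finset.mem_erase.mpr ⟨htne d, ht d⟩
  have hcard : Fintype.card (Fin ℓ) ≤ (S.erase s).card :=
    Finset.card_le_card_of_injOn t (fun d _ => hmaps d) (fun a _ b _ h => hinj h)
  rw [Fintype.card_fin, Finset.card_erase_of_mem hs] at hcard
  have hpos : 0 < S.card := Finset.card_pos.mpr ⟨s, hs⟩
  omega

/-- Recovery of one point of the line from the others, via the parity check. -/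
lemma recover_point {F : Type*} [Field F]
    (x y : (Fin ℓ → Fin (m + 1)) → F) (d : Fin ℓ) (s : Fin ℓ → Fin (m + 1))
    (hx : ∑ i : Fin (m + 1), x (Function.update s d i) = 0)
    (hy : ∑ i : Fin (m + 1), y (Function.update s d i) = 0)
    (hagree : ∀ i : Fin (m + 1), i ≠ s d →
      x (Function.update s d i) = y (Function.update s d i)) :
    x s = y s := by
  have hx' : x (Function.update s d (s d))
      + ∑ i ∈ Finset.univ.erase (s d), x (Function.update s d i) = 0 := by
    rw [Finset.add_sum_erase Finset.univ (fun i => x (Function.update s d i))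
      (Finset.mem_univ (s d))]
    exact hx
  have hy' : y (Function.update s d (s d))
      + ∑ i ∈ Finset.univ.erase (s d), y (Function.update s d i) = 0 := by
    rw [Finset.add_sum_erase Finset.univ (fun i => y (Function.update s d i))
      (Finset.mem_univ (s d))]
    exact hy
  have hsum : ∑ i ∈ Finset.univ.erase (s d), x (Function.update s d i)
      = ∑ i ∈ Finset.univ.erase (s d), y (Function.update s d i) :=
    Finset.sum_congr rfl fun i hi => hagree i (Finset.mem_erase.mp hi).1
  have : x (Function.update s d (s d)) = y (Function.update s d (s d)) := by
    have := hx'.trans hy'.symm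
    rw [hsum] at this
    exact add_right_cancel this
  simpa [Function.update_eq_self] using this

/-- Main induction. -/
lemma main_ind {F : Type*} [Field F]
    (C : Set ((Fin ℓ → Fin (m + 1)) → F))
    (hC : C = {x | ∀ d : Fin ℓ, ∀ y : Fin ℓ → Fin (m + 1),
      ∑ i : Fin (m + 1), x (Function.update y d i) = 0}) :
    ∀ n : ℕ, ∀ S : Finset (Fin ℓ → Fin (m + 1)), S.card ≤ n → S.card ≤ ℓ →
      ∃ Γ : Finset (Fin ℓ → Fin (m + 1)), Disjoint Γ S ∧ Γ.card ≤ m * S.card ∧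
        ∀ x ∈ C, ∀ y ∈ C, (∀ e ∈ Γ, x e = y e) → ∀ e ∈ S, x e = y e := by
  intro n
  induction n with
  | zero =>
    intro S hSn _
    have : S = ∅ := Finset.card_eq_zero.mp (Nat.le_zero.mp hSn)
    subst this
    exact ⟨∅, by simp, by simp, fun x _ y _ _ e he => absurd he (by simp)⟩
  | succ n ih =>
    intro S hSn hSℓ
    rcases S.eq_empty_or_nonempty with rfl | ⟨s, hs⟩
    · exact ⟨∅, by simp, by simp, fun x _ y _ _ e he => absurd he (by simp)⟩
    obtain ⟨d, hd⟩ := lineA S hSℓ s hs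
    set S' := S.erase s with hS'
    have hcard' : S'.card = S.card - 1 := Finset.card_erase_of_mem hs
    have hpos : 0 < S.card := Finset.card_pos.mpr ⟨s, hs⟩
    obtain ⟨Γ', hΓ'disj, hΓ'card, hΓ'rec⟩ := ih S' (by omega) (by omega)
    set L : Finset (Fin ℓ → Fin (m + 1)) :=
      (Finset.univ.erase (s d)).image (fun i => Function.update s d i) with hL
    have hLcard : L.card ≤ m := by
      have : L.card ≤ (Finset.univ.erase (s d)).card := Finset.card_image_le
      simpa using this
    have hLmem : ∀ e ∈ L, ∃ i : Fin (m + 1), i ≠ s d ∧ e = Function.update s d i := by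
      intro e he
      obtain ⟨i, hi, hie⟩ := Finset.mem_image.mp he
      exact ⟨i, (Finset.mem_erase.mp hi).1, hie.symm⟩
    have hLS : ∀ e ∈ L, e ∉ S := by
      intro e he heS
      obtain ⟨i, hi, rfl⟩ := hLmem e he
      have : Function.update s d i = s := by
        apply hd _ heS
        intro d' hd'
        exact Function.update_of_ne hd' i s
      have : i = s d := by
        have := congrFun this d
        simpa using this
      exact hi this
    refine ⟨(Γ'.erase s) ∪ L, ?_, ?_, ?_⟩
    · rw [Finset.disjoint_left]
      intro e he heS
      rcases Finset.mem_union.mp he with h | h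
      · obtain ⟨hes, heΓ'⟩ := Finset.mem_erase.mp h
        exact Finset.disjoint_left.mp hΓ'disj heΓ' (Finset.mem_erase.mpr ⟨hes, heS⟩)
      · exact hLS e h heS
    · calc ((Γ'.erase s) ∪ L).card ≤ (Γ'.erase s).card + L.card := Finset.card_union_le _ _
        _ ≤ Γ'.card + m := Nat.add_le_add (Finset.card_erase_le) hLcard
        _ ≤ m * S'.card + m := Nat.add_le_add_right hΓ'card m
        _ ≤ m * S.card := by
              obtain ⟨k, hk⟩ : ∃ k, S.card = k + 1 := ⟨S.card - 1, by omega⟩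
              rw [hcard', hk]
              simp [Nat.mul_succ]
    · intro x hx y hy hagree e heS
      have hxC := hC ▸ hx
      have hyC := hC ▸ hy
      have hxs : x s = y s := by
        apply recover_point x y d s (hxC d s) (hyC d s)
        intro i hi
        apply hagree
        exact Finset.mem_union_right _ (Finset.mem_image.mpr
          ⟨i, Finset.mem_erase.mpr ⟨hi, Finset.mem_univ i⟩, rfl⟩)
      by_cases hes : e = s
      · subst hes; exact hxs
      · apply hΓ'rec x hx y hy _ e (Finset.mem_erase.mpr ⟨hes, heS⟩)
        intro e' he'
        by_cases he's : e' = s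
        · subst he's; exact hxs
        · exact hagree e' (Finset.mem_union_left _ (Finset.mem_erase.mpr ⟨he's, he'⟩))

end Aux

/-- the `ℓ`-dimensional product parity code over a finite field, with
coordinates the points of the array `(Fin (m+1))^ℓ` and a single-parity-check constraint
along every axis-parallel line, has `(m·ℓ, ℓ)`-cooperative locality. -/
theorem stmt_18 (m ℓ : ℕ) (hm : 0 < m) (hℓ : 0 < ℓ)
    (F : Type*) [Field F] [Fintype F]
    (C : Set ((Fin ℓ → Fin (m + 1)) → F))
    (hC : C = {x | ∀ d : Fin ℓ, ∀ y : Fin ℓ → Fin (m + 1),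
      ∑ i : Fin (m + 1), x (Function.update y d i) = 0}) :
    ∀ S : Finset (Fin ℓ → Fin (m + 1)), S.card = ℓ →
      ∃ Γ : Finset (Fin ℓ → Fin (m + 1)), Disjoint Γ S ∧ Γ.card ≤ m * ℓ ∧
        ∀ x ∈ C, ∀ y ∈ C, (∀ e ∈ Γ, x e = y e) → ∀ e ∈ S, x e = y e := by
  intro S hScard
  obtain ⟨Γ, h1, h2, h3⟩ := main_ind C hC ℓ S (le_of_eq hScard) (le_of_eq hScard)
  exact ⟨Γ, h1, by rwa [hScard] at h2, h3⟩
end
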